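/- arXiv:1904.02692 — 12 statements merged into one kernel-verified Lean document; each statement's English description precedes it below -/
import Mathlib

section
/- Let k ≥ 2 be an integer and let n_A, n_B be positive integers. Let V_AB be a real symmetric (2n_A+2n_B)×(2n_A+2n_B) matrix with block form V_AB = [[V_A, X],[Xᵀ, V_B]], where V_A is 2n_A×2n_A and V_B is 2n_B×2n_B. Then the following are equivalent: (i) there exists a real symmetric 2n_B×2n_B matrix Y such that the real symmetric (2n_A+2k·n_B)×(2n_A+2k·n_B) block matrix Ṽ, whose first block row is (V_A, X, X, …, X), and whose remaining k block rows have Xᵀ in the first column, V_B on the diagonal, and Y in all other positions, satisfies Ṽ ≥ iΩ_{n_A+k·n_B}; (ii) there exists a real symmetric 2n_B×2n_B matrix Δ with Δ ≥ iΩ_{n_B} and such that the complex Hermitian matrix V_AB − (iΩ_{n_A} ⊕ ((1−1/k)·Δ + (i/k)·Ω_{n_B})) is positive semidefinite. -/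
open Matrix Complex ComplexOrder

/-- The standard symplectic form on `n` modes: block-diagonal with `n` blocks `[[0,1],[-1,0]]`. -/
noncomputable def OmegaM (n : ℕ) : Matrix (Fin (2*n)) (Fin (2*n)) ℝ :=
  Matrix.of fun i j =>
    if i.val + 1 = j.val ∧ i.val % 2 = 0 then (1 : ℝ)
    else if j.val + 1 = i.val ∧ j.val % 2 = 0 then -1 else 0

/-- Complexification of a real matrix. -/
noncomputable def cplx {m p : Type*} (M : Matrix m p ℝ) : Matrix m p ℂ :=
  M.map (fun x => (x : ℂ))

/-- The putative covariance matrix of a symmetric `k`-extension: first block row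
`(V_A, X, X, …, X)`, remaining block rows with `Xᵀ` in the first column, `V_B` on the
diagonal and `Y` elsewhere. -/
noncomputable def extMat (nA nB k : ℕ)
    (VA : Matrix (Fin (2*nA)) (Fin (2*nA)) ℝ)
    (X : Matrix (Fin (2*nA)) (Fin (2*nB)) ℝ)
    (VB Y : Matrix (Fin (2*nB)) (Fin (2*nB)) ℝ) :
    Matrix (Fin (2*nA) ⊕ Fin k × Fin (2*nB)) (Fin (2*nA) ⊕ Fin k × Fin (2*nB)) ℝ :=
  Matrix.of fun p q =>
    match p, q with
    | Sum.inl a, Sum.inl a' => VA a a'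
    | Sum.inl a, Sum.inr (_, b) => X a b
    | Sum.inr (_, b), Sum.inl a => X a b
    | Sum.inr (j, b), Sum.inr (j', b') => if j = j' then VB b b' else Y b b'

/-- The symplectic form `Ω_{n_A + k·n_B}` on system `A` together with `k` copies of `B`. -/
noncomputable def extOmega (nA nB k : ℕ) :
    Matrix (Fin (2*nA) ⊕ Fin k × Fin (2*nB)) (Fin (2*nA) ⊕ Fin k × Fin (2*nB)) ℝ :=
  Matrix.of fun p q =>
    match p, q with
    | Sum.inl a, Sum.inl a' => OmegaM nA a a'
    | Sum.inr (j, b), Sum.inr (j', b') => if j = j' then OmegaM nB b b' else 0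
    | _, _ => 0

/-!
Write `W_A = V_A - iΩ_A`, `W = V_B - iΩ_B`, `G = Ṽ - iΩ` for condition (i), and `R` for the
matrix of condition (ii) with `Δ = V_B - Y`. Compressing `G` by `(a, b) ↦ (a, b/k, …, b/k)`
gives `R`, and compressing it by `b ↦ (0, b, -b, 0, …, 0)` gives `2 (W - Y)`, which is the bona
fide condition for `Δ`. Conversely, `G = E R Eᴴ + C ⊗ (W - Y)` with `E (a, b) = (a, b, …, b)` and
`C = 1 - J/k` the centering projection on the `k` copies of `B`.
-/

open Finset

lemma sum_sum_ite_eq_mul {R : Type*} [CommRing R] {k : ℕ} (u v : Fin k → R) (w y : R) :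
    ∑ j, ∑ j', (if j' = j then u j' * w * v j else u j' * y * v j)
      = (∑ j, u j * v j) * (w - y) + (∑ j, u j) * (∑ j, v j) * y := by
  have h : ∀ j j' : Fin k, (if j' = j then u j' * w * v j else u j' * y * v j)
      = (if j' = j then u j' * v j * (w - y) else 0) + u j' * v j * y := by
    intro j j'
    split_ifs <;> ring
  simp only [h, sum_add_distrib, sum_ite_eq', mem_univ, if_true, ← sum_mul, ← mul_sum]

namespace SymmetricExtension

variable {𝕜 A B : Type*} [RCLike 𝕜] (k : ℕ)

def extension (WA : Matrix A A 𝕜) (Xc : Matrix A B 𝕜) (W Y : Matrix B B 𝕜) :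
    Matrix (A ⊕ Fin k × B) (A ⊕ Fin k × B) 𝕜 :=
  fromBlocks WA (of fun a jb => Xc a jb.2) (of fun jb a => star (Xc a jb.2))
    (of fun jb jb' => if jb.1 = jb'.1 then W jb.2 jb'.2 else Y jb.2 jb'.2)

def reduced (WA : Matrix A A 𝕜) (Xc : Matrix A B 𝕜) (W Y : Matrix B B 𝕜) :
    Matrix (A ⊕ B) (A ⊕ B) 𝕜 :=
  fromBlocks WA Xc Xcᴴ ((k : 𝕜)⁻¹ • W + (1 - (k : 𝕜)⁻¹) • Y)

def copies [DecidableEq B] (u : Fin k → 𝕜) : Matrix (Fin k × B) B 𝕜 :=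
  of fun jb b => if jb.2 = b then u jb.1 else 0

/-- `(a, b) ↦ (a, u₁ b, …, u_k b)` -/
def spread [DecidableEq A] [DecidableEq B] (u : Fin k → 𝕜) :
    Matrix (A ⊕ Fin k × B) (A ⊕ B) 𝕜 :=
  fromBlocks 1 0 0 (copies k u)

def centering : Matrix (Fin k) (Fin k) 𝕜 := 1 - (k : 𝕜)⁻¹ • of fun _ _ => 1

variable {k}

lemma posSemidef_centering (hk : (k : 𝕜) ≠ 0) :
    (centering k : Matrix (Fin k) (Fin k) 𝕜).PosSemidef := by
  have hC : centering k = (centering k)ᴴ * (centering k : Matrix (Fin k) (Fin k) 𝕜) := by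
    ext j j'
    simp [centering, Matrix.mul_apply, Matrix.one_apply, sub_mul, mul_sub, sum_sub_distrib]
    field_simp
    ring
  rw [hC]
  exact posSemidef_conjTranspose_mul_self _

variable [Fintype A] [Fintype B] [DecidableEq B]
  {WA : Matrix A A 𝕜} {Xc : Matrix A B 𝕜} {W Y : Matrix B B 𝕜}

lemma posSemidef_sub_of_extension {i j : Fin k} (hij : i ≠ j)
    (h : (extension k WA Xc W Y).PosSemidef) : (W - Y).PosSemidef := by
  let c : Fin k → 𝕜 := Pi.single i 1 - Pi.single j 1
  convert (h.conjTranspose_mul_mul_same (fromRows (0 : Matrix A B 𝕜) (copies k c))).smul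
    (a := (2 : 𝕜)⁻¹) (by positivity) using 1
  rw [eq_inv_smul_iff₀ two_ne_zero]
  ext b b'
  simp [c, extension, copies, Matrix.mul_apply, Fintype.sum_sum_type, Fintype.sum_prod_type,
    apply_ite (starRingEnd 𝕜), sum_mul]
  rw [sum_sum_ite_eq_mul]
  simp [Pi.single_apply, sum_sub_distrib, hij, hij.symm, mul_sub]
  ring

variable [DecidableEq A]

lemma posSemidef_reduced_of_extension (hk : (k : 𝕜) ≠ 0)
    (h : (extension k WA Xc W Y).PosSemidef) : (reduced k WA Xc W Y).PosSemidef := by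
  convert h.conjTranspose_mul_mul_same (spread k fun _ => (k : 𝕜)⁻¹) using 1
  ext (a | b) (a' | b') <;>
    simp [spread, reduced, extension, copies, Matrix.mul_apply, Fintype.sum_sum_type,
      Fintype.sum_prod_type, Matrix.one_apply, apply_ite (starRingEnd 𝕜), sum_mul]
  · field_simp
  · field_simp
  · rw [sum_sum_ite_eq_mul]
    simp only [sum_const, card_univ, Fintype.card_fin, nsmul_eq_mul]
    field_simp
    ring

lemma posSemidef_extension_of_reduced (hk : (k : 𝕜) ≠ 0)
    (hR : (reduced k WA Xc W Y).PosSemidef) (hD : (W - Y).PosSemidef) :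
    (extension k WA Xc W Y).PosSemidef := by
  convert (hR.mul_mul_conjTranspose_same (spread k 1)).add
    (((posSemidef_centering hk).kronecker hD).conjTranspose_mul_mul_same
      (fromCols (0 : Matrix (Fin k × B) A 𝕜) 1)) using 1
  ext (a | ⟨j, b⟩) (a' | ⟨j', b'⟩) <;>
    simp [spread, reduced, extension, copies, centering, Matrix.mul_apply, Fintype.sum_sum_type,
      Matrix.one_apply]
  split_ifs <;> ring

theorem posSemidef_extension_iff (hk : 2 ≤ k) :
    (extension k WA Xc W Y).PosSemidef ↔
      (reduced k WA Xc W Y).PosSemidef ∧ (W - Y).PosSemidef := by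
  have hk0 : (k : 𝕜) ≠ 0 := by exact_mod_cast (by omega : k ≠ 0)
  refine ⟨fun h => ⟨posSemidef_reduced_of_extension hk0 h, ?_⟩,
    fun ⟨hR, hD⟩ => posSemidef_extension_of_reduced hk0 hR hD⟩
  exact posSemidef_sub_of_extension (i := ⟨0, by omega⟩) (j := ⟨1, by omega⟩) (by simp) h

end SymmetricExtension

open SymmetricExtension

lemma cplx_sub {m p : Type*} (M N : Matrix m p ℝ) : cplx (M - N) = cplx M - cplx N := by
  ext i j
  simp [cplx]

lemma cplx_extMat_sub_extOmega (nA nB k : ℕ) (VA : Matrix (Fin (2*nA)) (Fin (2*nA)) ℝ)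
    (X : Matrix (Fin (2*nA)) (Fin (2*nB)) ℝ) (VB Y : Matrix (Fin (2*nB)) (Fin (2*nB)) ℝ) :
    cplx (extMat nA nB k VA X VB Y) - Complex.I • cplx (extOmega nA nB k) =
      extension k (cplx VA - Complex.I • cplx (OmegaM nA)) (cplx X)
        (cplx VB - Complex.I • cplx (OmegaM nB)) (cplx Y) := by
  ext (a | ⟨j, b⟩) (a' | ⟨j', b'⟩) <;> simp [extension, cplx, extMat, extOmega]
  split_ifs <;> simp

lemma cplx_fromBlocks_sub_eq_reduced (nA nB k : ℕ) (VA : Matrix (Fin (2*nA)) (Fin (2*nA)) ℝ)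
    (X : Matrix (Fin (2*nA)) (Fin (2*nB)) ℝ) (VB Δ : Matrix (Fin (2*nB)) (Fin (2*nB)) ℝ) :
    cplx (fromBlocks VA X Xᵀ VB) -
        fromBlocks (Complex.I • cplx (OmegaM nA)) 0 0
          ((1 - 1/(k:ℂ)) • cplx Δ + (Complex.I/(k:ℂ)) • cplx (OmegaM nB)) =
      reduced k (cplx VA - Complex.I • cplx (OmegaM nA)) (cplx X)
        (cplx VB - Complex.I • cplx (OmegaM nB)) (cplx (VB - Δ)) := by
  ext (a | b) (a' | b') <;> simp [reduced, cplx]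
  ring

theorem gaussian_k_extendibility_iff_SDP_general
    (k nA nB : ℕ) (hk : 2 ≤ k)
    (VA : Matrix (Fin (2*nA)) (Fin (2*nA)) ℝ)
    (X : Matrix (Fin (2*nA)) (Fin (2*nB)) ℝ)
    (VB : Matrix (Fin (2*nB)) (Fin (2*nB)) ℝ)
    (hVB : VB.IsSymm) :
    (∃ Y : Matrix (Fin (2*nB)) (Fin (2*nB)) ℝ, Y.IsSymm ∧
        (cplx (extMat nA nB k VA X VB Y)
          - Complex.I • cplx (extOmega nA nB k)).PosSemidef)
    ↔
    (∃ Δ : Matrix (Fin (2*nB)) (Fin (2*nB)) ℝ, Δ.IsSymm ∧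
        (cplx Δ - Complex.I • cplx (OmegaM nB)).PosSemidef ∧
        (cplx (Matrix.fromBlocks VA X Xᵀ VB) -
          Matrix.fromBlocks (Complex.I • cplx (OmegaM nA)) 0 0
            ((1 - 1/(k:ℂ)) • cplx Δ
              + (Complex.I/(k:ℂ)) • cplx (OmegaM nB))).PosSemidef) := by
  have bona_fide : ∀ Δ : Matrix (Fin (2*nB)) (Fin (2*nB)) ℝ,
      cplx Δ - Complex.I • cplx (OmegaM nB) =
        (cplx VB - Complex.I • cplx (OmegaM nB)) - cplx (VB - Δ) := by
    intro Δ
    rw [cplx_sub]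
    abel
  simp only [cplx_extMat_sub_extOmega, cplx_fromBlocks_sub_eq_reduced,
    posSemidef_extension_iff hk]
  constructor
  · rintro ⟨Y, hY, hR, hD⟩
    refine ⟨VB - Y, hVB.sub hY, ?_, by rwa [sub_sub_cancel]⟩
    rwa [bona_fide, sub_sub_cancel]
  · rintro ⟨Δ, hΔ, hD, hR⟩
    exact ⟨VB - Δ, hVB.sub hΔ, hR, by rwa [bona_fide] at hD⟩

/-- A bipartite Gaussian covariance matrix admits a (Gaussian, symmetric) `k`-extension
if and only if the semidefinite feasibility criterion holds. -/
theorem gaussian_k_extendibility_iff_SDP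
    (k nA nB : ℕ) (hk : 2 ≤ k) (hnA : 0 < nA) (hnB : 0 < nB)
    (VA : Matrix (Fin (2*nA)) (Fin (2*nA)) ℝ)
    (X : Matrix (Fin (2*nA)) (Fin (2*nB)) ℝ)
    (VB : Matrix (Fin (2*nB)) (Fin (2*nB)) ℝ)
    (hVA : VA.IsSymm) (hVB : VB.IsSymm) :
    (∃ Y : Matrix (Fin (2*nB)) (Fin (2*nB)) ℝ, Y.IsSymm ∧
        (cplx (extMat nA nB k VA X VB Y)
          - Complex.I • cplx (extOmega nA nB k)).PosSemidef)
    ↔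
    (∃ Δ : Matrix (Fin (2*nB)) (Fin (2*nB)) ℝ, Δ.IsSymm ∧
        (cplx Δ - Complex.I • cplx (OmegaM nB)).PosSemidef ∧
        (cplx (Matrix.fromBlocks VA X Xᵀ VB) -
          Matrix.fromBlocks (Complex.I • cplx (OmegaM nA)) 0 0
            ((1 - 1/(k:ℂ)) • cplx Δ
              + (Complex.I/(k:ℂ)) • cplx (OmegaM nB))).PosSemidef) :=
  gaussian_k_extendibility_iff_SDP_general k nA nB hk VA X VB hVB
end

section
/- Let k ≥ 2 be an integer and let n_A, n_B be positive integers. Let V_AB be a real symmetric (2n_A+2n_B)×(2n_A+2n_B) matrix. If there exists a real symmetric 2n_B×2n_B matrix Δ with Δ ≥ iΩ_{n_B} such that the complex Hermitian matrix V_AB − (iΩ_{n_A} ⊕ ((1−1/k)·Δ + (i/k)·Ω_{n_B})) is positive semidefinite, then the complex Hermitian matrix V_AB − (iΩ_{n_A} ⊕ (−(1−2/k)·i·Ω_{n_B})) is positive semidefinite. -/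
open Matrix Complex ComplexOrder

/-!
Transposing `Δ - iΩ ≥ 0` gives `Δ + iΩ ≥ 0`, because `Δ` is symmetric and `Ω` antisymmetric.
Adding `(1 - 1/k)(Δ + iΩ_B)`, placed in the `B` block, to the positive semidefinite matrix of the
hypothesis cancels `Δ` and leaves exactly `-(1 - 2/k) iΩ_B` in that block.
-/

theorem Matrix.PosSemidef.fromBlocks_zero₁₂_zero₂₁ {m n R : Type*} [Fintype m] [Fintype n]
    [Ring R] [PartialOrder R] [StarRing R] [AddLeftMono R]
    {A : Matrix m m R} {D : Matrix n n R} (hA : A.PosSemidef) (hD : D.PosSemidef) :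
    (fromBlocks A 0 0 D).PosSemidef := by
  refine .of_dotProduct_mulVec_nonneg (hA.isHermitian.fromBlocks (by simp) hD.isHermitian)
    fun x ↦ ?_
  obtain ⟨u, v, rfl⟩ : ∃ u v, x = Sum.elim u v := ⟨_, _, (Sum.elim_comp_inl_inr x).symm⟩
  simp only [fromBlocks_mulVec, zero_mulVec, add_zero, zero_add, Sum.elim_comp_inl,
    Sum.elim_comp_inr, Function.star_sumElim, sumElim_dotProduct_sumElim]
  exact add_nonneg (hA.dotProduct_mulVec_nonneg u) (hD.dotProduct_mulVec_nonneg v)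

theorem OmegaM_transpose (n : ℕ) : (OmegaM n)ᵀ = -OmegaM n := by
  ext i j
  simp only [OmegaM, transpose_apply, of_apply, Matrix.neg_apply]
  split_ifs <;> try norm_num
  omega

theorem cplx_transpose {m p : Type*} (M : Matrix m p ℝ) : (cplx M)ᵀ = cplx Mᵀ :=
  transpose_map.symm

theorem cplx_neg {m p : Type*} (M : Matrix m p ℝ) : cplx (-M) = -cplx M := by
  ext; simp [cplx]

theorem posSemidef_cplx_add_I_smul_of_sub {n : Type*} [Fintype n] {S J : Matrix n n ℝ}
    (hS : S.IsSymm) (hJ : Jᵀ = -J) (h : (cplx S - I • cplx J).PosSemidef) :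
    (cplx S + I • cplx J).PosSemidef := by
  simpa only [transpose_sub, transpose_smul, cplx_transpose, hS.eq, hJ, cplx_neg, smul_neg,
    sub_neg_eq_add] using h.transpose

theorem one_sub_one_div_natCast_nonneg (k : ℕ) : (0 : ℂ) ≤ 1 - 1 / (k : ℂ) := by
  have hk : (0 : ℝ) ≤ 1 - 1 / (k : ℝ) := sub_nonneg.mpr (one_div (k : ℝ) ▸ Nat.cast_inv_le_one k)
  simpa using Complex.zero_le_real.mpr hk

theorem k_ext_SDP_implies_simplified_general
    (k nA nB : ℕ)
    (V : Matrix (Fin (2*nA) ⊕ Fin (2*nB)) (Fin (2*nA) ⊕ Fin (2*nB)) ℝ)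
    (h : ∃ Δ : Matrix (Fin (2*nB)) (Fin (2*nB)) ℝ, Δ.IsSymm ∧
        (cplx Δ - Complex.I • cplx (OmegaM nB)).PosSemidef ∧
        (cplx V -
          Matrix.fromBlocks (Complex.I • cplx (OmegaM nA)) 0 0
            ((1 - 1/(k:ℂ)) • cplx Δ
              + (Complex.I/(k:ℂ)) • cplx (OmegaM nB))).PosSemidef) :
    (cplx V -
      Matrix.fromBlocks (Complex.I • cplx (OmegaM nA)) 0 0
        ((-(1 - 2/(k:ℂ)) * Complex.I) • cplx (OmegaM nB))).PosSemidef := by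
  obtain ⟨Δ, hΔ, hΔΩ, hVΔ⟩ := h
  have hΔΩ_add := posSemidef_cplx_add_I_smul_of_sub hΔ (OmegaM_transpose nB) hΔΩ
  have hBlock := (PosSemidef.zero (n := Fin (2 * nA))).fromBlocks_zero₁₂_zero₂₁
    (hΔΩ_add.smul (one_sub_one_div_natCast_nonneg k))
  convert hVΔ.add hBlock using 1
  rw [sub_add]
  congr 1
  rw [eq_sub_iff_add_eq, fromBlocks_add]
  simp only [add_zero]
  congr 1
  module

/-- The semidefinite criterion for `k`-extendibility implies the simplified necessary
condition `V_AB ≥ iΩ_A ⊕ (−(1−2/k)·iΩ_B)`. -/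
theorem k_ext_SDP_implies_simplified
    (k nA nB : ℕ) (hk : 2 ≤ k) (hnA : 0 < nA) (hnB : 0 < nB)
    (V : Matrix (Fin (2*nA) ⊕ Fin (2*nB)) (Fin (2*nA) ⊕ Fin (2*nB)) ℝ)
    (hV : V.IsSymm)
    (h : ∃ Δ : Matrix (Fin (2*nB)) (Fin (2*nB)) ℝ, Δ.IsSymm ∧
        (cplx Δ - Complex.I • cplx (OmegaM nB)).PosSemidef ∧
        (cplx V -
          Matrix.fromBlocks (Complex.I • cplx (OmegaM nA)) 0 0
            ((1 - 1/(k:ℂ)) • cplx Δ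
              + (Complex.I/(k:ℂ)) • cplx (OmegaM nB))).PosSemidef) :
    (cplx V -
      Matrix.fromBlocks (Complex.I • cplx (OmegaM nA)) 0 0
        ((-(1 - 2/(k:ℂ)) * Complex.I) • cplx (OmegaM nB))).PosSemidef :=
  k_ext_SDP_implies_simplified_general k nA nB V h
end

section
/- Let k ≥ 2 be an integer, let n_A be a positive integer and set n_B = 1. Let V_AB be a real symmetric (2n_A+2)×(2n_A+2) matrix satisfying the bona fide condition V_AB ≥ iΩ_{n_A+1}. If the complex Hermitian matrix V_AB − (iΩ_{n_A} ⊕ (−(1−2/k)·i·Ω_1)) is positive semidefinite, then there exists a real symmetric 2×2 matrix Δ with Δ ≥ iΩ_1 such that the complex Hermitian matrix V_AB − (iΩ_{n_A} ⊕ ((1−1/k)·Δ + (i/k)·Ω_1)) is positive semidefinite. In other words, for a single-mode B system the simplified condition V_AB ≥ iΩ_{n_A} ⊕ (−(1−2/k)·iΩ_1) is necessary and sufficient for the semidefinite k-extendibility criterion. -/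
open Matrix Complex ComplexOrder

namespace Matrix

variable {𝕜 m n : Type*} [RCLike 𝕜] [Fintype m]

theorem IsHermitian.exists_mulVec_eq [DecidableEq m] {A : Matrix m m 𝕜} (hA : A.IsHermitian)
    {c : m → 𝕜} (hc : ∀ x, A *ᵥ x = 0 → star c ⬝ᵥ x = 0) : ∃ y, A *ᵥ y = c := by
  have hmem : WithLp.toLp 2 c ∈ LinearMap.range (toEuclideanLin A) := by
    rw [← Submodule.orthogonal_orthogonal (LinearMap.range _),
      (isSymmetric_toEuclideanLin_iff.mpr hA).orthogonal_range, Submodule.mem_orthogonal']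
    intro x hx
    rw [EuclideanSpace.inner_eq_star_dotProduct, dotProduct_comm]
    exact hc _ (congrArg WithLp.ofLp hx)
  obtain ⟨y, hy⟩ := hmem
  exact ⟨WithLp.ofLp y, congrArg WithLp.ofLp hy⟩

theorem IsHermitian.exists_mul_eq [DecidableEq m] {A : Matrix m m 𝕜} (hA : A.IsHermitian)
    {B : Matrix m n 𝕜} (hB : ∀ x, A *ᵥ x = 0 → Bᴴ *ᵥ x = 0) : ∃ Y, A * Y = B := by
  have hcol (j : n) : ∃ y, A *ᵥ y = fun i => B i j := hA.exists_mulVec_eq fun x hx => by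
    simpa [mulVec, dotProduct] using congrFun (hB x hx) j
  choose y hy using hcol
  refine ⟨of fun i j => y j i, ?_⟩
  ext i j
  exact congrFun (hy j) i

variable [Fintype n]

theorem PosSemidef.conjTranspose_mulVec_eq_zero {A : Matrix m m 𝕜} {B : Matrix m n 𝕜}
    {D : Matrix n n 𝕜} (h : (fromBlocks A B Bᴴ D).PosSemidef) {x : m → 𝕜}
    (hx : A *ᵥ x = 0) : Bᴴ *ᵥ x = 0 := by
  have hz : fromBlocks A B Bᴴ D *ᵥ (x ⊕ᵥ 0) = 0 := by
    rw [← h.dotProduct_mulVec_zero_iff]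
    simp [fromBlocks_mulVec, hx, Function.star_sumElim]
  simpa [fromBlocks_mulVec, hx] using congrArg (· ∘ Sum.inr) hz

theorem schur_complement_eq_of_mul_eq {A : Matrix m m 𝕜} {B : Matrix m n 𝕜}
    {Y : Matrix m n 𝕜} (D : Matrix n n 𝕜) (hA : A.IsHermitian) (hY : A * Y = B)
    (x : m → 𝕜) (y : n → 𝕜) :
    star (x ⊕ᵥ y) ᵥ* fromBlocks A B Bᴴ D ⬝ᵥ (x ⊕ᵥ y) = star (x + Y *ᵥ y) ᵥ* A ⬝ᵥ (x + Y *ᵥ y) +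
      star y ᵥ* (D - Yᴴ * A * Y) ⬝ᵥ y := by
  subst hY
  simp [Function.star_sumElim, vecMul_fromBlocks, add_vecMul, dotProduct_mulVec, vecMul_sub,
    Matrix.mul_assoc, hA.eq, star_mulVec, ← vecMul_vecMul]
  abel

theorem PosSemidef.fromBlocks_iff_of_mul_eq {A : Matrix m m 𝕜} {B : Matrix m n 𝕜}
    {Y : Matrix m n 𝕜} (D : Matrix n n 𝕜) (hA : A.PosSemidef) (hY : A * Y = B) :
    (fromBlocks A B Bᴴ D).PosSemidef ↔ (D - Yᴴ * A * Y).PosSemidef := by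
  have hS : (Yᴴ * A * Y).IsHermitian := isHermitian_conjTranspose_mul_mul Y hA.isHermitian
  rw [posSemidef_iff_dotProduct_mulVec, posSemidef_iff_dotProduct_mulVec]
  constructor
  · rintro ⟨hN, hN'⟩
    refine ⟨(isHermitian_fromBlocks_iff.mp hN).2.2.2.sub hS, fun y => ?_⟩
    have := hN' (-(Y *ᵥ y) ⊕ᵥ y)
    rwa [dotProduct_mulVec, schur_complement_eq_of_mul_eq D hA.isHermitian hY,
      neg_add_cancel, star_zero, zero_vecMul, zero_dotProduct, zero_add,
      ← dotProduct_mulVec] at this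
  · rintro ⟨hT, hT'⟩
    refine ⟨hA.isHermitian.fromBlocks rfl (by simpa using hT.add hS), fun z => ?_⟩
    rw [dotProduct_mulVec, ← Sum.elim_comp_inl_inr z,
      schur_complement_eq_of_mul_eq D hA.isHermitian hY, ← dotProduct_mulVec,
      ← dotProduct_mulVec (star (z ∘ Sum.inr))]
    exact add_nonneg (hA.dotProduct_mulVec_nonneg _) (hT' _)

theorem PosSemidef.exists_isHermitian_fromBlocks_iff [DecidableEq m] {A : Matrix m m 𝕜}
    {B : Matrix m n 𝕜} {D₀ : Matrix n n 𝕜} (h : (fromBlocks A B Bᴴ D₀).PosSemidef) :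
    ∃ S : Matrix n n 𝕜, S.IsHermitian ∧
      ∀ D, (fromBlocks A B Bᴴ D).PosSemidef ↔ (D - S).PosSemidef := by
  have hA : A.PosSemidef := h.submatrix Sum.inl
  obtain ⟨Y, hY⟩ := hA.isHermitian.exists_mul_eq fun x hx => h.conjTranspose_mulVec_eq_zero hx
  exact ⟨_, isHermitian_conjTranspose_mul_mul Y hA.isHermitian,
    fun D => hA.fromBlocks_iff_of_mul_eq D hY⟩

theorem IsHermitian.posSemidef_iff_trace_nonneg_and_det_nonneg
    {A : Matrix (Fin 2) (Fin 2) 𝕜} (hA : A.IsHermitian) :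
    A.PosSemidef ↔ 0 ≤ A.trace ∧ 0 ≤ A.det := by
  refine ⟨fun h => ⟨h.trace_nonneg, h.det_nonneg⟩, fun ⟨htr, hdet⟩ => ?_⟩
  rw [hA.trace_eq_sum_eigenvalues, Fin.sum_univ_two, ← RCLike.ofReal_add,
    RCLike.ofReal_nonneg] at htr
  rw [hA.det_eq_prod_eigenvalues, Fin.prod_univ_two, ← RCLike.ofReal_mul,
    RCLike.ofReal_nonneg] at hdet
  rw [hA.posSemidef_iff_eigenvalues_nonneg]
  intro i
  fin_cases i <;> simp <;> nlinarith

end Matrix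

theorem Matrix.IsSymm.isHermitian_cplx {m : Type*} {R : Matrix m m ℝ} (hR : R.IsSymm) :
    (cplx R).IsHermitian := by
  ext i j
  simp [cplx, hR.apply i j]

theorem cplx_smul {m n : Type*} (c : ℝ) (M : Matrix m n ℝ) :
    cplx (c • M) = (c : ℂ) • cplx M := by
  ext i j
  simp [cplx]

theorem cplx_sub_fromBlocks_of_isSymm {m n : Type*} {V : Matrix (m ⊕ n) (m ⊕ n) ℝ}
    (hV : V.IsSymm) (P : Matrix m m ℂ) (Q : Matrix n n ℂ) :
    cplx V - fromBlocks P 0 0 Q = fromBlocks (cplx V.toBlocks₁₁ - P) (cplx V.toBlocks₁₂)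
      (cplx V.toBlocks₁₂)ᴴ (cplx V.toBlocks₂₂ - Q) := by
  ext (i | i) (j | j) <;>
    simp [cplx, hV.apply, toBlocks₁₁, toBlocks₁₂, toBlocks₂₂]

theorem abs_sub_one_div_le_of_abs_le {k v d : ℝ} (h₁ : |v - 1| ≤ d)
    (h₂ : |v + (1 - 2 / k)| ≤ d) : |v - 1 / k| ≤ d - (1 - 1 / k) := by
  rw [abs_le] at h₁ h₂ ⊢
  constructor <;> linarith [show 2 / k = 2 * (1 / k) by ring]

theorem OmegaM_one : OmegaM 1 = !![0, 1; -1, 0] := by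
  ext i j
  fin_cases i <;> fin_cases j <;> simp [OmegaM]

local notation "Ω₁" => cplx (OmegaM 1)

theorem posSemidef_cplx_add_smul_OmegaM_one_iff {R : Matrix (Fin (2*1)) (Fin (2*1)) ℝ}
    (hR : R.IsSymm) (s : ℝ) :
    (cplx R + (s * I) • Ω₁).PosSemidef ↔ 0 ≤ R.trace ∧ s ^ 2 ≤ R.det := by
  have h10 : R 1 0 = R 0 1 := hR.apply 0 1
  have hH : (cplx R + (s * I) • Ω₁).IsHermitian := by
    ext i j
    fin_cases i <;> fin_cases j <;> simp [cplx, OmegaM_one, h10]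
  have htr : (cplx R + (s * I) • Ω₁).trace = (R.trace : ℂ) := by
    simp [trace_fin_two, cplx, OmegaM_one]
  have hdet : (cplx R + (s * I) • Ω₁).det = ((R.det - s ^ 2 : ℝ) : ℂ) := by
    simp [det_fin_two, cplx, OmegaM_one, h10]
    linear_combination (s : ℂ) ^ 2 * I_sq
  rw [hH.posSemidef_iff_trace_nonneg_and_det_nonneg, htr, hdet, Complex.zero_le_real,
    Complex.zero_le_real, sub_nonneg]

theorem Matrix.IsHermitian.exists_eq_cplx_add_smul_OmegaM_one
    {T : Matrix (Fin (2*1)) (Fin (2*1)) ℂ} (hT : T.IsHermitian) :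
    ∃ R : Matrix (Fin (2*1)) (Fin (2*1)) ℝ, R.IsSymm ∧
      ∃ s : ℝ, T = cplx R + (s * I) • Ω₁ := by
  have hdiag (i : Fin (2*1)) : (T i i).im = 0 := conj_eq_iff_im.mp (hT.apply i i)
  have h10 : star (T 0 1) = T 1 0 := hT.apply 1 0
  refine ⟨T.map re, ?_, (T 0 1).im, ?_⟩
  · ext i j
    fin_cases i <;> fin_cases j <;> simp [← h10]
  · ext i j
    fin_cases i <;> fin_cases j <;> simp [cplx, OmegaM_one, hdiag, ← h10, Complex.ext_iff]

theorem simplified_implies_SDP_one_mode {k : ℝ} (hk : 1 < k)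
    {T : Matrix (Fin (2*1)) (Fin (2*1)) ℂ} (hT : T.IsHermitian)
    (hbona : (T - I • Ω₁).PosSemidef)
    (h : (T - (-(1 - 2 / (k : ℂ)) * I) • Ω₁).PosSemidef) :
    ∃ Δ : Matrix (Fin (2*1)) (Fin (2*1)) ℝ, Δ.IsSymm ∧
      (cplx Δ - I • Ω₁).PosSemidef ∧
      (T - ((1 - 1 / (k : ℂ)) • cplx Δ + (I / (k : ℂ)) • Ω₁)).PosSemidef := by
  obtain ⟨R, hR, v, rfl⟩ := hT.exists_eq_cplx_add_smul_OmegaM_one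
  rw [show cplx R + (v * I) • Ω₁ - I • Ω₁ =
      cplx R + ((v - 1 : ℝ) * I) • Ω₁ by push_cast; module,
    posSemidef_cplx_add_smul_OmegaM_one_iff hR] at hbona
  rw [show cplx R + (v * I) • Ω₁ - (-(1 - 2 / (k : ℂ)) * I) • Ω₁ =
      cplx R + ((v + (1 - 2 / k) : ℝ) * I) • Ω₁ by push_cast; module,
    posSemidef_cplx_add_smul_OmegaM_one_iff hR] at h
  obtain ⟨htr, hdet₁⟩ := hbona
  obtain ⟨-, hdet₂⟩ := h
  set d := √R.det
  have hdet : R.det = d ^ 2 := (Real.sq_sqrt ((sq_nonneg _).trans hdet₁)).symm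
  have hβ : 0 < 1 - 1 / k := sub_pos.mpr ((div_lt_one (by linarith)).mpr hk)
  have hw : |v - 1 / k| ≤ d - (1 - 1 / k) :=
    abs_sub_one_div_le_of_abs_le (Real.abs_le_sqrt hdet₁) (Real.abs_le_sqrt hdet₂)
  have hd : 0 < d := by linarith [abs_nonneg (v - 1 / k)]
  clear_value d
  obtain ⟨R₀, hR₀, hdet₀, rfl⟩ : ∃ R₀ : Matrix (Fin (2*1)) (Fin (2*1)) ℝ,
      R₀.IsSymm ∧ R₀.det = 1 ∧ R = d • R₀ :=
    ⟨d⁻¹ • R, hR.smul _, by simp [hdet, hd.ne'], by simp [smul_smul, hd.ne']⟩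
  have hdet_smul (c : ℝ) : (c • R₀).det = c ^ 2 := by simp [hdet₀]
  rw [trace_smul, smul_eq_mul] at htr
  have htr₀ : 0 ≤ R₀.trace := (mul_nonneg_iff_of_pos_left hd).mp htr
  refine ⟨R₀, hR₀, ?_, ?_⟩
  · rw [show cplx R₀ - I • Ω₁ = cplx R₀ + ((-1 : ℝ) * I) • Ω₁ by
        push_cast; module, posSemidef_cplx_add_smul_OmegaM_one_iff hR₀, hdet₀]
    exact ⟨htr₀, by norm_num⟩
  · rw [show cplx (d • R₀) + (v * I) • Ω₁ -
          ((1 - 1 / (k : ℂ)) • cplx R₀ + (I / k) • Ω₁) =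
        cplx ((d - (1 - 1 / k)) • R₀) + ((v - 1 / k : ℝ) * I) • Ω₁ by
        rw [cplx_smul, cplx_smul]; push_cast; module,
      posSemidef_cplx_add_smul_OmegaM_one_iff (hR₀.smul _), hdet_smul, trace_smul, smul_eq_mul]
    exact ⟨mul_nonneg ((abs_nonneg _).trans hw) htr₀, sq_le_sq.mpr (hw.trans (le_abs_self _))⟩

theorem single_mode_simplified_implies_SDP_general
    (k nA : ℕ) (hk : 2 ≤ k)
    (V : Matrix (Fin (2*nA) ⊕ Fin (2*1)) (Fin (2*nA) ⊕ Fin (2*1)) ℝ)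
    (hV : V.IsSymm)
    (hbona : (cplx V -
      Complex.I • cplx (Matrix.fromBlocks (OmegaM nA) 0 0 (OmegaM 1))).PosSemidef)
    (h : (cplx V -
      Matrix.fromBlocks (Complex.I • cplx (OmegaM nA)) 0 0
        ((-(1 - 2/(k:ℂ)) * Complex.I) • cplx (OmegaM 1))).PosSemidef) :
    ∃ Δ : Matrix (Fin (2*1)) (Fin (2*1)) ℝ, Δ.IsSymm ∧
      (cplx Δ - Complex.I • cplx (OmegaM 1)).PosSemidef ∧
      (cplx V -
        Matrix.fromBlocks (Complex.I • cplx (OmegaM nA)) 0 0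
          ((1 - 1/(k:ℂ)) • cplx Δ
            + (Complex.I/(k:ℂ)) • cplx (OmegaM 1))).PosSemidef := by
  have hblocks := cplx_sub_fromBlocks_of_isSymm hV (I • cplx (OmegaM nA))
  replace hbona :
      (cplx V - fromBlocks (I • cplx (OmegaM nA)) 0 0 (I • cplx (OmegaM 1))).PosSemidef := by
    simpa [cplx, fromBlocks_map, fromBlocks_smul] using hbona
  rw [hblocks] at hbona
  obtain ⟨S, hS, hschur⟩ := hbona.exists_isHermitian_fromBlocks_iff
  simp only [hblocks, hschur, sub_right_comm _ _ S] at hbona h ⊢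
  have hT : (cplx V.toBlocks₂₂ - S).IsHermitian :=
    (hV.submatrix Sum.inr).isHermitian_cplx.sub hS
  obtain ⟨Δ, hΔ, hΔbona, hΔV⟩ :=
    simplified_implies_SDP_one_mode (k := k) (by exact_mod_cast hk) hT hbona (by simpa using h)
  exact ⟨Δ, hΔ, hΔbona, by simpa using hΔV⟩

/-- For a single-mode `B` system (`n_B = 1`), the simplified condition
`V_AB ≥ iΩ_A ⊕ (−(1−2/k)·iΩ_1)` is sufficient (hence, with Statement 1, necessary and
sufficient) for the semidefinite `k`-extendibility criterion. -/
theorem single_mode_simplified_implies_SDP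
    (k nA : ℕ) (hk : 2 ≤ k) (hnA : 0 < nA)
    (V : Matrix (Fin (2*nA) ⊕ Fin (2*1)) (Fin (2*nA) ⊕ Fin (2*1)) ℝ)
    (hV : V.IsSymm)
    (hbona : (cplx V -
      Complex.I • cplx (Matrix.fromBlocks (OmegaM nA) 0 0 (OmegaM 1))).PosSemidef)
    (h : (cplx V -
      Matrix.fromBlocks (Complex.I • cplx (OmegaM nA)) 0 0
        ((-(1 - 2/(k:ℂ)) * Complex.I) • cplx (OmegaM 1))).PosSemidef) :
    ∃ Δ : Matrix (Fin (2*1)) (Fin (2*1)) ℝ, Δ.IsSymm ∧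
      (cplx Δ - Complex.I • cplx (OmegaM 1)).PosSemidef ∧
      (cplx V -
        Matrix.fromBlocks (Complex.I • cplx (OmegaM nA)) 0 0
          ((1 - 1/(k:ℂ)) • cplx Δ
            + (Complex.I/(k:ℂ)) • cplx (OmegaM 1))).PosSemidef :=
  single_mode_simplified_implies_SDP_general k nA hk V hV hbona h
end

section
/- Let n_A, n_B be positive integers and let V_AB be a real symmetric (2n_A+2n_B)×(2n_A+2n_B) matrix satisfying the bona fide condition V_AB ≥ iΩ_{n_A+n_B}. Then the following are equivalent: (i) for every integer k ≥ 2, the complex Hermitian matrix V_AB − (iΩ_{n_A} ⊕ (−(1−2/k)·i·Ω_{n_B})) is positive semidefinite; (ii) the complex Hermitian matrix V_AB − (iΩ_{n_A} ⊕ (−i·Ω_{n_B})) is positive semidefinite (i.e., the corresponding Gaussian state is PPT). -/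
open Matrix Complex ComplexOrder

/-!
Write `P` for the PPT matrix `V - (iΩ_A ⊕ -iΩ_B)` and `D = 0 ⊕ iΩ_B`. The `k`-th matrix is
`P - (2/k) D` and the bona fide matrix is `P - 2 D`. The set of `t` with `P - t D ≥ 0` is convex,
so it contains `[0, 2]` once it contains `0` and `2`; and it is closed, so it contains `0` once it
contains every `2/k`.
-/

open Filter Topology

namespace Matrix

variable {n 𝕜 : Type*} [RCLike 𝕜]

theorem isClosed_setOf_posSemidef [Fintype n] : IsClosed {A : Matrix n n 𝕜 | A.PosSemidef} := by
  have hset : {A : Matrix n n 𝕜 | A.PosSemidef} =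
      {A | Aᴴ = A} ∩ ⋂ x : n → 𝕜, {A | 0 ≤ star x ⬝ᵥ (A *ᵥ x)} := by
    ext A
    simp [posSemidef_iff_dotProduct_mulVec, IsHermitian]
  rw [hset]
  refine (isClosed_eq continuous_id.matrix_conjTranspose continuous_id).inter
    (isClosed_iInter fun x => isClosed_le continuous_const ?_)
  exact continuous_const.dotProduct (continuous_id.matrix_mulVec continuous_const)

theorem PosSemidef.of_tendsto [Fintype n] {ι : Type*} {l : Filter ι} [l.NeBot]
    {f : ι → Matrix n n 𝕜} {A : Matrix n n 𝕜} (hf : Tendsto f l (𝓝 A))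
    (h : ∀ᶠ i in l, (f i).PosSemidef) : A.PosSemidef :=
  isClosed_setOf_posSemidef.mem_of_tendsto hf h

theorem convex_setOf_posSemidef_sub_smul (P D : Matrix n n 𝕜) :
    Convex ℝ {t : ℝ | (P - t • D).PosSemidef} := by
  intro s hs t ht a b ha hb hab
  obtain rfl : b = 1 - a := by linarith
  have hcomb : P - (a • s + (1 - a) • t) • D = a • (P - s • D) + (1 - a) • (P - t • D) := by
    module
  change (P - (a • s + (1 - a) • t) • D).PosSemidef
  rw [hcomb]
  exact (hs.smul ha).add (ht.smul hb)

end Matrix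

theorem simplified_all_k_iff_PPT_general
    (nA nB : ℕ)
    (V : Matrix (Fin (2*nA) ⊕ Fin (2*nB)) (Fin (2*nA) ⊕ Fin (2*nB)) ℝ)
    (hbona : (cplx V -
      Complex.I • cplx (Matrix.fromBlocks (OmegaM nA) 0 0 (OmegaM nB))).PosSemidef) :
    (∀ k : ℕ, 2 ≤ k →
      (cplx V -
        Matrix.fromBlocks (Complex.I • cplx (OmegaM nA)) 0 0
          ((-(1 - 2/(k:ℂ)) * Complex.I) • cplx (OmegaM nB))).PosSemidef)
    ↔
    (cplx V -
      Matrix.fromBlocks (Complex.I • cplx (OmegaM nA)) 0 0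
        ((-Complex.I) • cplx (OmegaM nB))).PosSemidef := by
  set P := cplx V - fromBlocks (I • cplx (OmegaM nA)) 0 0 ((-I) • cplx (OmegaM nB))
  set D : Matrix (Fin (2*nA) ⊕ Fin (2*nB)) (Fin (2*nA) ⊕ Fin (2*nB)) ℂ :=
    fromBlocks 0 0 0 (I • cplx (OmegaM nB))
  have hk_eq (k : ℕ) : cplx V - fromBlocks (I • cplx (OmegaM nA)) 0 0
      ((-(1 - 2/(k:ℂ)) * I) • cplx (OmegaM nB)) = P - (2 / k : ℝ) • D := by
    ext (i | i) (j | j) <;> simp [P, D, cplx]; ring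
  have hbona_eq : P - (2 : ℝ) • D =
      cplx V - I • cplx (fromBlocks (OmegaM nA) 0 0 (OmegaM nB)) := by
    ext (i | i) (j | j) <;> simp [P, D, cplx]; ring
  simp only [hk_eq]
  constructor
  · intro h
    refine PosSemidef.of_tendsto (l := atTop) ?_ (eventually_atTop.2 ⟨2, h⟩)
    simpa using tendsto_const_nhds.sub
      ((tendsto_const_div_atTop_nhds_zero_nat (2 : ℝ)).smul_const D)
  · intro hP k hk
    refine (convex_setOf_posSemidef_sub_smul P D).ordConnected.out (x := 0) (y := 2)
      (by simpa using hP) (by simpa [hbona_eq] using hbona) ⟨by positivity, ?_⟩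
    exact div_le_self zero_le_two (by exact_mod_cast (by omega : 1 ≤ k))

/-- The simplified `k`-extendibility condition holds for all `k ≥ 2` if and only if
the state is PPT, i.e. `V_AB ≥ iΩ_A ⊕ (−iΩ_B)`. -/
theorem simplified_all_k_iff_PPT
    (nA nB : ℕ) (hnA : 0 < nA) (hnB : 0 < nB)
    (V : Matrix (Fin (2*nA) ⊕ Fin (2*nB)) (Fin (2*nA) ⊕ Fin (2*nB)) ℝ)
    (hV : V.IsSymm)
    (hbona : (cplx V -
      Complex.I • cplx (Matrix.fromBlocks (OmegaM nA) 0 0 (OmegaM nB))).PosSemidef) :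
    (∀ k : ℕ, 2 ≤ k →
      (cplx V -
        Matrix.fromBlocks (Complex.I • cplx (OmegaM nA)) 0 0
          ((-(1 - 2/(k:ℂ)) * Complex.I) • cplx (OmegaM nB))).PosSemidef)
    ↔
    (cplx V -
      Matrix.fromBlocks (Complex.I • cplx (OmegaM nA)) 0 0
        ((-Complex.I) • cplx (OmegaM nB))).PosSemidef :=
  simplified_all_k_iff_PPT_general nA nB V hbona
end

section
/- Let k ≥ 2 be an integer and let a, b, c₊, c₋ be real numbers. Let V_AB be the 4×4 real symmetric matrix with rows (a, 0, c₊, 0), (0, a, 0, c₋), (c₊, 0, b, 0), (0, c₋, 0, b) (the Simon normal form of a two-mode covariance matrix). Assume V_AB ≥ iΩ₂. Then the complex Hermitian matrix V_AB − (iΩ₁ ⊕ (−(1−2/k)·i·Ω₁)) is positive semidefinite if and only if (ab−c₊²)(ab−c₋²) ≥ (1−2/k)²(a²−1) + b² − 2(1−2/k)c₊c₋. -/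
/-!
Write `t = 1 - 2/k`, so `0 ≤ t < 1`. Both `V - iΩ₂` and the `k`-extendibility matrix are block
matrices whose diagonal blocks have the shape `[[x, i s], [-i s, x]]` and whose off-diagonal block
is `diag(c₊, c₋)`. The bona fide condition gives `b ≥ 1 > t`, so the lower-right block
`[[b, i t], [-i t, b]]` is positive definite and the whole matrix is positive semidefinite iff its
Schur complement, again of that shape, is. A matrix of that shape is positive semidefinite iff its
diagonal and its determinant are nonnegative. The diagonal conditions `b c±² ≤ a (b² - t²)`
follow from the nonnegative `3 × 3` principal minors of `V - iΩ₂`, and the determinant condition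
is, after clearing the factor `b² - t² > 0`, the stated inequality.
-/

open Matrix Complex ComplexOrder

/-- The standard symplectic form on one mode. -/
noncomputable def Omega1 : Matrix (Fin 2) (Fin 2) ℝ := !![0, 1; -1, 0]

noncomputable def herm2 (p q r : ℝ) : Matrix (Fin 2) (Fin 2) ℂ :=
  !![(p : ℂ), q * I; -q * I, r]

lemma herm2_isHermitian (p q r : ℝ) : (herm2 p q r).IsHermitian := by
  ext i j
  fin_cases i <;> fin_cases j <;> simp [herm2]

lemma herm2_det (p q r : ℝ) : (herm2 p q r).det = (p * r - q ^ 2 : ℝ) := by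
  rw [herm2, det_fin_two_of]
  push_cast
  linear_combination (q : ℂ) ^ 2 * I_sq

lemma star_dotProduct_herm2_mulVec (p q r : ℝ) (x : Fin 2 → ℂ) :
    star x ⬝ᵥ herm2 p q r *ᵥ x =
      (p * normSq (x 0) + r * normSq (x 1) - 2 * q * (starRingEnd ℂ (x 0) * x 1).im : ℝ) := by
  simp only [herm2, dotProduct, mulVec, Fin.sum_univ_two, Pi.star_apply, RCLike.star_def,
    of_apply, cons_val', cons_val_zero, cons_val_one, empty_val', cons_val_fin_one]
  apply Complex.ext <;> simp [normSq_apply, mul_re, mul_im] <;> ring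

lemma herm2_posSemidef_iff (p q r : ℝ) :
    (herm2 p q r).PosSemidef ↔ 0 ≤ p ∧ 0 ≤ r ∧ q ^ 2 ≤ p * r := by
  constructor
  · intro h
    have hp := h.diag_nonneg (i := 0)
    have hr := h.diag_nonneg (i := 1)
    have hdet := h.det_nonneg
    simp only [herm2, of_apply, cons_val', cons_val_zero, cons_val_one, empty_val',
      cons_val_fin_one] at hp hr
    rw [herm2_det] at hdet
    norm_cast at hp hr hdet
    exact ⟨hp, hr, by linarith⟩
  · rintro ⟨hp, hr, hq⟩
    refine .of_dotProduct_mulVec_nonneg (herm2_isHermitian p q r) fun x => ?_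
    rw [star_dotProduct_herm2_mulVec]
    norm_cast
    set m := (starRingEnd ℂ (x 0) * x 1).im
    have hX := normSq_nonneg (x 0)
    have hY := normSq_nonneg (x 1)
    have hm : m ^ 2 ≤ normSq (x 0) * normSq (x 1) := by
      rw [← normSq_conj (x 0), ← normSq_mul, normSq_apply]
      nlinarith [sq_nonneg (starRingEnd ℂ (x 0) * x 1).re]
    -- `(p X + r Y)² ≥ 4 p r X Y ≥ 4 q² m²`
    have hsq : (2 * q * m) ^ 2 ≤ (p * normSq (x 0) + r * normSq (x 1)) ^ 2 := by
      nlinarith [mul_le_mul hq hm (sq_nonneg m) (mul_nonneg hp hr),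
        sq_nonneg (p * normSq (x 0) - r * normSq (x 1))]
    nlinarith [abs_le_of_sq_le_sq' hsq (by positivity)]

lemma herm2_posDef {p q r : ℝ} (hp : 0 < p) (hq : q ^ 2 < p * r) : (herm2 p q r).PosDef := by
  have hr : 0 < r := pos_of_mul_pos_right (by nlinarith) hp.le
  rw [((herm2_posSemidef_iff p q r).2 ⟨hp.le, hr.le, hq.le⟩).posDef_iff_det_ne_zero, herm2_det]
  exact_mod_cast (sub_pos.2 hq).ne'

lemma herm2_inv (p q r : ℝ) :
    (herm2 p q r)⁻¹ =
      herm2 (r / (p * r - q ^ 2)) (-q / (p * r - q ^ 2)) (p / (p * r - q ^ 2)) := by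
  rw [Matrix.inv_def, herm2_det, Ring.inverse_eq_inv', adjugate_fin_two]
  ext i j
  fin_cases i <;> fin_cases j <;> simp [herm2] <;> field_simp

def simonCov (a b cp cm : ℝ) : Matrix (Fin 2 ⊕ Fin 2) (Fin 2 ⊕ Fin 2) ℝ :=
  fromBlocks !![a, 0; 0, a] !![cp, 0; 0, cm] !![cp, 0; 0, cm]ᵀ !![b, 0; 0, b]

noncomputable def simonBlock (a s b t cp cm : ℝ) :
    Matrix (Fin 2 ⊕ Fin 2) (Fin 2 ⊕ Fin 2) ℂ :=
  fromBlocks (herm2 a s a) (cplx !![cp, 0; 0, cm]) (cplx !![cp, 0; 0, cm])ᴴ (herm2 b t b)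

lemma cplx_simonCov_sub_smul_symplectic (a b cp cm t : ℝ) :
    cplx (simonCov a b cp cm) -
        fromBlocks (I • cplx Omega1) 0 0 ((-(t : ℂ) * I) • cplx Omega1) =
      simonBlock a (-1) b t cp cm := by
  ext (i | i) (j | j) <;> fin_cases i <;> fin_cases j <;>
    simp [simonCov, simonBlock, cplx, Omega1, herm2]

lemma I_smul_cplx_fromBlocks_symplectic :
    I • cplx (fromBlocks Omega1 0 0 Omega1) =
      fromBlocks (I • cplx Omega1) 0 0 ((-((-1 : ℝ) : ℂ) * I) • cplx Omega1) := by
  ext (i | i) (j | j) <;> simp [cplx]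

lemma simonBlock_posSemidef_iff {a s b t cp cm : ℝ} (hb : 0 < b) (ht : t ^ 2 < b ^ 2) :
    (simonBlock a s b t cp cm).PosSemidef ↔
      (herm2 (a - b * cp ^ 2 / (b ^ 2 - t ^ 2)) (s + t * cp * cm / (b ^ 2 - t ^ 2))
        (a - b * cm ^ 2 / (b ^ 2 - t ^ 2))).PosSemidef := by
  have hB : (herm2 b t b).PosDef := herm2_posDef hb (by nlinarith)
  have : Invertible (herm2 b t b) := hB.isUnit.invertible
  suffices hschur :
      herm2 a s a - cplx !![cp, 0; 0, cm] * (herm2 b t b)⁻¹ * (cplx !![cp, 0; 0, cm])ᴴ =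
      herm2 (a - b * cp ^ 2 / (b ^ 2 - t ^ 2)) (s + t * cp * cm / (b ^ 2 - t ^ 2))
        (a - b * cm ^ 2 / (b ^ 2 - t ^ 2)) by
    rw [simonBlock, PosDef.fromBlocks₂₂ _ _ hB, hschur]
  rw [herm2_inv]
  ext i j
  fin_cases i <;> fin_cases j <;>
    simp [herm2, cplx, mul_apply, Fin.sum_univ_two, conjTranspose_apply] <;> ring

section
variable {a s b t cp cm : ℝ}

lemma herm2_posSemidef_of_simonBlock (h : (simonBlock a s b t cp cm).PosSemidef) :
    (herm2 a s a).PosSemidef ∧ (herm2 b t b).PosSemidef :=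
  ⟨h.submatrix Sum.inl, h.submatrix Sum.inr⟩

lemma mul_sq_le_of_simonBlock (h : (simonBlock a s b t cp cm).PosSemidef) :
    b * cp ^ 2 ≤ a * (b ^ 2 - t ^ 2) ∧ b * cm ^ 2 ≤ a * (b ^ 2 - t ^ 2) := by
  have hp := (h.submatrix ![Sum.inl 0, Sum.inr 0, Sum.inr 1]).det_nonneg
  have hm := (h.submatrix ![Sum.inl 1, Sum.inr 0, Sum.inr 1]).det_nonneg
  rw [det_fin_three] at hp hm
  simp [simonBlock, herm2, cplx, Complex.le_def] at hp hm
  constructor <;> linarith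
end

lemma schur_det_condition_iff (a b t cp cm : ℝ) (he : 0 < b ^ 2 - t ^ 2) :
    (-1 + t * cp * cm / (b ^ 2 - t ^ 2)) ^ 2 ≤
        (a - b * cp ^ 2 / (b ^ 2 - t ^ 2)) * (a - b * cm ^ 2 / (b ^ 2 - t ^ 2)) ↔
      t ^ 2 * (a ^ 2 - 1) + b ^ 2 - 2 * t * cp * cm ≤ (a * b - cp ^ 2) * (a * b - cm ^ 2) := by
  have key : (a - b * cp ^ 2 / (b ^ 2 - t ^ 2)) * (a - b * cm ^ 2 / (b ^ 2 - t ^ 2)) -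
      (-1 + t * cp * cm / (b ^ 2 - t ^ 2)) ^ 2 =
      ((a * b - cp ^ 2) * (a * b - cm ^ 2) - (t ^ 2 * (a ^ 2 - 1) + b ^ 2 - 2 * t * cp * cm)) /
        (b ^ 2 - t ^ 2) := by
    field_simp
    ring
  rw [← sub_nonneg, key, le_div_iff₀ he, zero_mul, sub_nonneg]

/-- For a two-mode covariance matrix in Simon normal form, the `k`-extendibility matrix
condition is equivalent to the scalar inequality
`(ab−c₊²)(ab−c₋²) ≥ (1−2/k)²(a²−1) + b² − 2(1−2/k)c₊c₋`. -/
theorem two_mode_k_ext_iff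
    (k : ℕ) (hk : 2 ≤ k) (a b cp cm : ℝ)
    (V : Matrix (Fin 2 ⊕ Fin 2) (Fin 2 ⊕ Fin 2) ℝ)
    (hVdef : V = Matrix.fromBlocks !![a, 0; 0, a] !![cp, 0; 0, cm]
      (!![cp, 0; 0, cm]ᵀ) !![b, 0; 0, b])
    (hbona : (cplx V -
      Complex.I • cplx (Matrix.fromBlocks Omega1 0 0 Omega1)).PosSemidef) :
    (cplx V -
      Matrix.fromBlocks (Complex.I • cplx Omega1) 0 0
        ((-(1 - 2/(k:ℂ)) * Complex.I) • cplx Omega1)).PosSemidef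
    ↔
    (a*b - cp^2) * (a*b - cm^2) ≥
      (1 - 2/(k:ℝ))^2 * (a^2 - 1) + b^2 - 2*(1 - 2/(k:ℝ))*cp*cm := by
  obtain rfl : V = simonCov a b cp cm := hVdef
  set t : ℝ := 1 - 2 / (k : ℝ)
  have ht₀ : 0 ≤ t := by
    have : (2 : ℝ) / k ≤ 1 := (div_le_one (by positivity)).2 (by exact_mod_cast hk)
    linarith
  have ht₁ : t < 1 := by
    have : (0 : ℝ) < 2 / k := by positivity
    linarith
  have htc : 1 - 2 / (k : ℂ) = (t : ℂ) := by push_cast [t]; ring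
  rw [I_smul_cplx_fromBlocks_symplectic, cplx_simonCov_sub_smul_symplectic] at hbona
  rw [htc, cplx_simonCov_sub_smul_symplectic]
  obtain ⟨hA, hB⟩ := herm2_posSemidef_of_simonBlock hbona
  obtain ⟨ha, -, -⟩ := (herm2_posSemidef_iff _ _ _).1 hA
  obtain ⟨hb, -, hb1⟩ := (herm2_posSemidef_iff _ _ _).1 hB
  obtain ⟨hcp, hcm⟩ := mul_sq_le_of_simonBlock hbona
  have he : 0 < b ^ 2 - t ^ 2 := by nlinarith
  rw [simonBlock_posSemidef_iff (by nlinarith) (by linarith), herm2_posSemidef_iff,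
    ge_iff_le, ← schur_det_condition_iff a b t cp cm he]
  have hdiag (c : ℝ) (hc : b * c ^ 2 ≤ a * (b ^ 2 - (-1) ^ 2)) :
      0 ≤ a - b * c ^ 2 / (b ^ 2 - t ^ 2) :=
    sub_nonneg.2 <| (div_le_iff₀ he).2 <| by
      nlinarith [mul_nonneg ha (by nlinarith : 0 ≤ 1 - t ^ 2)]
  rw [and_iff_right (hdiag cp hcp), and_iff_right (hdiag cm hcm)]
end

section
/- Let H be the 4×4 complex Hermitian matrix with rows (2, −i, 0, 2i), (i, 4, 2i, 0), (0, −2i, 2, −i), (−2i, 0, i, 4). Then there exists no real symmetric 4×4 matrix Δ such that both Δ − iΩ₂ and H − Δ are positive semidefinite. (Consequently, the Werner–Wolf bound entangled Gaussian state of 2+2 modes is not 2-extendible on the B system.) -/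
open Matrix Complex ComplexOrder

/-- The standard symplectic form on two modes. -/
noncomputable def Omega2 : Matrix (Fin 4) (Fin 4) ℝ :=
  !![0, 1, 0, 0; -1, 0, 0, 0; 0, 0, 0, 1; 0, 0, -1, 0]

/-- The matrix `H = 2(γ_B − X_γᵀ(γ_A − iΩ₂)⁻¹X_γ) − iΩ₂` from the Werner–Wolf state. -/
noncomputable def HWW : Matrix (Fin 4) (Fin 4) ℂ :=
  !![2, -Complex.I, 0, 2*Complex.I;
     Complex.I, 4, 2*Complex.I, 0;
     0, -2*Complex.I, 2, -Complex.I;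
     -2*Complex.I, 0, Complex.I, 4]

/-!
Semidefinite weak duality. For a real matrix `Δ` the trace `tr(FᴴΔF) = tr(Δ FFᴴ)` only sees the
real part of `FFᴴ`. So if `FFᴴ` and `CCᴴ` have the same real part, `A ≤ Δ ≤ B` gives
`tr(FᴴAF) ≤ tr(FᴴΔF) = tr(CᴴΔC) ≤ tr(CᴴBC)`, and a pair `F, C` violating this inequality rules out
every real `Δ`. For `A = iΩ₂` and `B = H` such a pair can be written down by hand.
-/

namespace Matrix

variable {n m k : Type*} [Fintype n] [Fintype m] [Fintype k]

lemma re_trace_map_ofReal_mul (Δ : Matrix n n ℝ) (M : Matrix n n ℂ) :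
    (Δ.map ofReal * M).trace.re = (Δ * M.map re).trace := by
  simp [trace, mul_apply]

lemma re_trace_conjTranspose_mul_map_ofReal_mul (Δ : Matrix n n ℝ) (F : Matrix n m ℂ) :
    (Fᴴ * Δ.map ofReal * F).trace.re = (Δ * (F * Fᴴ).map re).trace := by
  rw [trace_mul_cycle, trace_mul_comm, ← re_trace_map_ofReal_mul]

lemma PosSemidef.re_trace_conjTranspose_mul_mul_nonneg {A : Matrix n n ℂ} (hA : A.PosSemidef)
    (F : Matrix n m ℂ) : 0 ≤ (Fᴴ * A * F).trace.re :=
  (Complex.nonneg_iff.mp (hA.conjTranspose_mul_mul_same F).trace_nonneg).1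

theorem not_exists_real_between_of_re_gram_eq {A B : Matrix n n ℂ} (F : Matrix n m ℂ)
    (C : Matrix n k ℂ) (hgram : (F * Fᴴ).map re = (C * Cᴴ).map re)
    (hgap : (Cᴴ * B * C).trace.re < (Fᴴ * A * F).trace.re) :
    ¬ ∃ Δ : Matrix n n ℝ, (Δ.map ofReal - A).PosSemidef ∧ (B - Δ.map ofReal).PosSemidef := by
  rintro ⟨Δ, hlower, hupper⟩
  have hF := hlower.re_trace_conjTranspose_mul_mul_nonneg F
  have hC := hupper.re_trace_conjTranspose_mul_mul_nonneg C
  simp only [Matrix.mul_sub, Matrix.sub_mul, trace_sub, sub_re,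
    re_trace_conjTranspose_mul_map_ofReal_mul, hgram] at hF hC
  linarith

end Matrix

/- Write `HWW = diag(2,4,2,4) + iS` with `S` real antisymmetric, `SᵀS = 5`, and let
`D = diag(3,2,3,2)`. The certificates are `C = D(2 - iS)`, so that `CCᴴ = D(9 - 4iS)D`, and `F`
with `FFᴴ = 9D(1 + iΩ₂)D`; both Gram matrices have real part `9D²`. -/

noncomputable def wernerWolfLowerCert : Matrix (Fin 4) (Fin 2) ℂ :=
  !![9, 0; -6 * I, 0; 0, 9; 0, -6 * I]

noncomputable def wernerWolfUpperCert : Matrix (Fin 4) (Fin 4) ℂ :=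
  !![6, 3 * I, 0, -6 * I;
     -2 * I, 4, -4 * I, 0;
     0, 6 * I, 6, 3 * I;
     4 * I, 0, -2 * I, 4]

lemma wernerWolfCert_re_gram_eq :
    (wernerWolfLowerCert * wernerWolfLowerCertᴴ).map re =
      (wernerWolfUpperCert * wernerWolfUpperCertᴴ).map re := by
  ext i j
  simp only [map_apply, mul_apply, conjTranspose_apply, Fin.sum_univ_two, Fin.sum_univ_four]
  fin_cases i <;> fin_cases j <;> simp [wernerWolfLowerCert, wernerWolfUpperCert] <;> norm_num

lemma re_trace_wernerWolfUpperCert :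
    (wernerWolfUpperCertᴴ * HWW * wernerWolfUpperCert).trace.re = 132 := by
  simp [wernerWolfUpperCert, HWW, trace, mul_apply, Fin.sum_univ_four]
  norm_num

lemma re_trace_wernerWolfLowerCert :
    (wernerWolfLowerCertᴴ * (I • Omega2.map ofReal) * wernerWolfLowerCert).trace.re = 216 := by
  simp [wernerWolfLowerCert, Omega2, trace, mul_apply, Fin.sum_univ_four]
  norm_num

/-- There is no real symmetric `Δ` with `iΩ₂ ≤ Δ ≤ H`; consequently the Werner–Wolf
bound entangled Gaussian state of `2+2` modes is not 2-extendible on `B`. -/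
theorem wernerWolf_not_two_extendible :
    ¬ ∃ Δ : Matrix (Fin 4) (Fin 4) ℝ, Δ.IsSymm ∧
      (Δ.map (fun x => (x : ℂ)) - Complex.I • Omega2.map (fun x => (x : ℂ))).PosSemidef ∧
      (HWW - Δ.map (fun x => (x : ℂ))).PosSemidef := by
  rintro ⟨Δ, -, hlower, hupper⟩
  refine not_exists_real_between_of_re_gram_eq wernerWolfLowerCert wernerWolfUpperCert
    wernerWolfCert_re_gram_eq ?_ ⟨Δ, hlower, hupper⟩
  rw [re_trace_wernerWolfUpperCert, re_trace_wernerWolfLowerCert]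
  norm_num
end

section
/- Let k ≥ 2 be an integer, let η ∈ (0,1) and let N_B ≥ 0 be real. Then (1−η)(2N_B+1) ≥ 1 − 1/k + |η − 1/k| if and only if η ≤ (N_B + 1/k)/(N_B + 1). (In particular, the thermal channel with X = √η·𝟙 and Y = (1−η)(2N_B+1)·𝟙 is k-extendible if and only if η ≤ (N_B + 1/k)/(N_B + 1); for the pure-loss channel N_B = 0 this reduces to η ≤ 1/k.) -/
/-- The thermal channel of transmissivity `η ∈ (0,1)` and environment thermal photon
number `N_B ≥ 0` is `k`-extendible iff `η ≤ (N_B + 1/k)/(N_B + 1)`: scalar form of the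
criterion `√(det Y) ≥ 1 − 1/k + |det X − 1/k|` with `det X = η`,
`√(det Y) = (1−η)(2N_B+1)`. -/
theorem thermal_channel_k_ext_iff
    (k : ℕ) (hk : 2 ≤ k) (η NB : ℝ) (hη0 : 0 < η) (hη1 : η < 1) (hNB : 0 ≤ NB) :
    (1 - η) * (2*NB + 1) ≥ 1 - 1/(k:ℝ) + |η - 1/(k:ℝ)| ↔
      η ≤ (NB + 1/(k:ℝ)) / (NB + 1) := by
  have hk' : (2:ℝ) ≤ (k:ℝ) := by exact_mod_cast hk
  have hc0 : 0 < 1/(k:ℝ) := by positivity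
  have hc1 : 1/(k:ℝ) ≤ 1 := by
    rw [div_le_one (by linarith)]; linarith
  have hN1 : (0:ℝ) < NB + 1 := by linarith
  rw [le_div_iff₀ hN1]
  rcases le_or_gt (1/(k:ℝ)) η with h | h
  · rw [abs_of_nonneg (by linarith)]
    constructor <;> intro hh <;> nlinarith
  · rw [abs_of_neg (by linarith)]
    constructor <;> intro hh <;> nlinarith
end

section
/- Let k ≥ 2 be an integer, let G > 1 and let N_B ≥ 0 be real. Then (G−1)(2N_B+1) ≥ 1 − 1/k + |G − 1/k| if and only if N_B > 0 and G ≥ (N_B + 1 − 1/k)/N_B. (In particular, the amplifier channel with X = √G·𝟙 and Y = (G−1)(2N_B+1)·𝟙 is k-extendible if and only if N_B > 0 and G ≥ (N_B + 1 − 1/k)/N_B; the pure-amplifier channel with N_B = 0 is not k-extendible for any k ≥ 2.) -/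
/-- The amplifier channel of gain `G > 1` and environment thermal photon number
`N_B ≥ 0` is `k`-extendible iff `N_B > 0` and `G ≥ (N_B + 1 − 1/k)/N_B`: scalar form of
the criterion `√(det Y) ≥ 1 − 1/k + |det X − 1/k|` with `det X = G`,
`√(det Y) = (G−1)(2N_B+1)`. -/
theorem amplifier_channel_k_ext_iff
    (k : ℕ) (hk : 2 ≤ k) (G NB : ℝ) (hG : 1 < G) (hNB : 0 ≤ NB) :
    (G - 1) * (2*NB + 1) ≥ 1 - 1/(k:ℝ) + |G - 1/(k:ℝ)| ↔
      (0 < NB ∧ G ≥ (NB + 1 - 1/(k:ℝ)) / NB) := by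
  have hk2 : (2:ℝ) ≤ (k:ℝ) := by exact_mod_cast hk
  have hkpos : (0:ℝ) < (k:ℝ) := by linarith
  have hinv : 1/(k:ℝ) ≤ 1/2 := by
    rw [div_le_div_iff₀ hkpos (by norm_num)]; linarith
  have hinvpos : 0 < 1/(k:ℝ) := by positivity
  have habs : |G - 1/(k:ℝ)| = G - 1/(k:ℝ) := abs_of_pos (by linarith)
  rw [habs]
  -- inequality equivalent to NB*(G-1) ≥ 1 - 1/k
  constructor
  · intro h
    have hkey : NB * (G - 1) ≥ 1 - 1/(k:ℝ) := by nlinarith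
    have hNBpos : 0 < NB := by
      by_contra hn
      push_neg at hn
      have : NB = 0 := le_antisymm hn hNB
      rw [this] at hkey
      linarith
    refine ⟨hNBpos, ?_⟩
    rw [ge_iff_le, div_le_iff₀ hNBpos]
    nlinarith
  · rintro ⟨hNBpos, h⟩
    rw [ge_iff_le, div_le_iff₀ hNBpos] at h
    nlinarith
end

section
/- Let k ≥ 2 be an integer and let ξ > 0 be real. Then the complex Hermitian 2×2 matrix ξ·𝟙₂ + iΩ₁ + (1−2/k)·iΩ₁ is positive semidefinite if and only if ξ ≥ 2(1 − 1/k). (In particular, the single-mode additive noise channel with X = 𝟙 and Y = ξ·𝟙 is k-extendible if and only if ξ ≥ 2(1 − 1/k).) -/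
open Matrix Complex ComplexOrder

/-!
The matrix is `ξ𝟙 + a·iΩ₁` with `a = 2(1 - 1/k) ≥ 0`. Evaluating its quadratic form at `(1, i)`
gives `2(ξ - a)`, so positivity forces `a ≤ ξ`; conversely `ξ𝟙 + a·iΩ₁ = (ξ - a)𝟙 + a·vv*` with
`v = (1, -i)`, a sum of positive semidefinite matrices.
-/

noncomputable def symplecticNoiseMatrix (x a : ℝ) : Matrix (Fin 2) (Fin 2) ℂ :=
  !![(x : ℂ), a * I; -(a * I), x]

lemma cplx_smul_one_add_smul_Omega1 (x a : ℝ) :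
    cplx (x • (1 : Matrix (Fin 2) (Fin 2) ℝ)) + ((a : ℂ) * I) • cplx Omega1
      = symplecticNoiseMatrix x a := by
  ext i j
  fin_cases i <;> fin_cases j <;> simp [cplx, Omega1, symplecticNoiseMatrix]

lemma transpose_symplecticNoiseMatrix (x a : ℝ) :
    (symplecticNoiseMatrix x a)ᵀ = symplecticNoiseMatrix x (-a) := by
  ext i j
  fin_cases i <;> fin_cases j <;> simp [symplecticNoiseMatrix]

lemma star_dotProduct_symplecticNoiseMatrix_mulVec (x a : ℝ) :
    star ![1, I] ⬝ᵥ (symplecticNoiseMatrix x a *ᵥ ![1, I]) = (2 * (x - a) : ℝ) := by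
  simp [symplecticNoiseMatrix, mulVec, dotProduct, Fin.sum_univ_two]
  linear_combination (2 * (a : ℂ) - x) * I_mul_I

lemma symplecticNoiseMatrix_eq_smul_one_add_smul_vecMulVec (x a : ℝ) :
    symplecticNoiseMatrix x a
      = (x - a) • (1 : Matrix (Fin 2) (Fin 2) ℂ) + a • vecMulVec ![1, -I] (star ![1, -I]) := by
  ext i j
  fin_cases i <;> fin_cases j <;> simp [symplecticNoiseMatrix, vecMulVec]

lemma le_of_posSemidef_symplecticNoiseMatrix {x a : ℝ}
    (h : (symplecticNoiseMatrix x a).PosSemidef) : a ≤ x := by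
  have h_form := h.dotProduct_mulVec_nonneg ![1, I]
  rw [star_dotProduct_symplecticNoiseMatrix_mulVec] at h_form
  linarith [Complex.zero_le_real.1 h_form]

lemma posSemidef_symplecticNoiseMatrix_of_le {x a : ℝ} (ha : 0 ≤ a) (hax : a ≤ x) :
    (symplecticNoiseMatrix x a).PosSemidef := by
  rw [symplecticNoiseMatrix_eq_smul_one_add_smul_vecMulVec]
  exact (PosSemidef.one.smul (sub_nonneg.2 hax)).add ((posSemidef_vecMulVec_self_star _).smul ha)

lemma posSemidef_symplecticNoiseMatrix_neg_iff (x a : ℝ) :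
    (symplecticNoiseMatrix x (-a)).PosSemidef ↔ (symplecticNoiseMatrix x a).PosSemidef := by
  rw [← transpose_symplecticNoiseMatrix, posSemidef_transpose_iff]

theorem posSemidef_symplecticNoiseMatrix_iff (x a : ℝ) :
    (symplecticNoiseMatrix x a).PosSemidef ↔ |a| ≤ x := by
  constructor
  · intro h
    have h_neg := (posSemidef_symplecticNoiseMatrix_neg_iff x a).2 h
    exact abs_le.2 ⟨by linarith [le_of_posSemidef_symplecticNoiseMatrix h_neg],
      le_of_posSemidef_symplecticNoiseMatrix h⟩
  · intro h
    rcases le_total 0 a with ha | ha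
    · exact posSemidef_symplecticNoiseMatrix_of_le ha ((le_abs_self a).trans h)
    · rw [← posSemidef_symplecticNoiseMatrix_neg_iff]
      exact posSemidef_symplecticNoiseMatrix_of_le (neg_nonneg.2 ha) ((neg_le_abs a).trans h)

theorem additive_noise_channel_k_ext_iff_general
    (k : ℕ) (ξ : ℝ) :
    (cplx (ξ • (1 : Matrix (Fin 2) (Fin 2) ℝ)) + Complex.I • cplx Omega1
      + ((1 - 2/(k:ℂ)) * Complex.I) • cplx Omega1).PosSemidef
    ↔ ξ ≥ 2 * (1 - 1/(k:ℝ)) := by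
  have h_coeff : I + (1 - 2/(k:ℂ)) * I = ((2 * (1 - 1/(k:ℝ)) : ℝ) : ℂ) * I := by
    push_cast
    ring
  have h_nonneg : 0 ≤ 2 * (1 - 1/(k:ℝ)) := by
    linarith [one_div (k:ℝ) ▸ Nat.cast_inv_le_one (α := ℝ) k]
  rw [add_assoc, ← add_smul, h_coeff, cplx_smul_one_add_smul_Omega1,
    posSemidef_symplecticNoiseMatrix_iff, abs_of_nonneg h_nonneg, ge_iff_le]

/-- The additive noise channel (`X = 𝟙`, `Y = ξ𝟙`) is `k`-extendible iff
`ξ ≥ 2(1 − 1/k)`: the complex Hermitian matrix `ξ𝟙 + iΩ₁ + (1−2/k)iΩ₁` is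
positive semidefinite iff `ξ ≥ 2(1 − 1/k)`. -/
theorem additive_noise_channel_k_ext_iff
    (k : ℕ) (hk : 2 ≤ k) (ξ : ℝ) (hξ : 0 < ξ) :
    (cplx (ξ • (1 : Matrix (Fin 2) (Fin 2) ℝ)) + Complex.I • cplx Omega1
      + ((1 - 2/(k:ℂ)) * Complex.I) • cplx Omega1).PosSemidef
    ↔ ξ ≥ 2 * (1 - 1/(k:ℝ)) :=
  additive_noise_channel_k_ext_iff_general k ξ
end

section
/- Let k > 1 be a real number and set λ = (k+1)/(k−1). Define f_k : [1,∞) → ℝ by f_k(ν) = (ν+1)^{k+1}(λν+1)^{−k} − (ν−1)^{k+1}(λν−1)^{−k} (real powers, with (ν−1)^{k+1} = 0 at ν = 1). Then f_k is strictly monotonically increasing on [1,∞), and consequently its minimum over [1,∞) is attained at ν = 1 with value f_k(1) = 2((k−1)/k)^k. -/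
/-!
Write `λ = (k+1)/(k-1)`, so that `(k-1)λ = k+1`. With this relation the derivative of
`(ν+c)^{k+1}(λν+c)^{-k}` collapses to `λ(ν-c)(ν+c)^k(λν+c)^{-k-1}`, and `f_k'(ν)` becomes
`λ(ν²-1)` times `(ν+1)^{k-1}(λν+1)^{-k-1} - (ν-1)^{k-1}(λν-1)^{-k-1}`.
Taking logarithms, this bracket is positive iff `λν·L(λν) < ν·L(ν)` for
`L(x) = log((x+1)/(x-1))`, so it suffices that `x·L(x)` decreases on `(1,∞)`.
With `t = 1/x` this is `(log(1+t) - log(1-t))/t = ∑ 2t^{2n}/(2n+1)`, increasing in `t`.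
-/
open Real Set

lemma strictMonoOn_log_one_add_sub_log_one_sub_div :
    StrictMonoOn (fun t : ℝ => (log (1 + t) - log (1 - t)) / t) (Ioo 0 1) := by
  have hasSum_div : ∀ u ∈ Ioo (0 : ℝ) 1,
      HasSum (fun n : ℕ => 2 * (1 / (2 * n + 1)) * u ^ (2 * n))
        ((log (1 + u) - log (1 - u)) / u) := fun u ⟨hu0, hu1⟩ => by
    have hu : |u| < 1 := abs_lt.2 ⟨by linarith, hu1⟩
    refine ((hasSum_log_sub_log_of_abs_lt_one hu).div_const u).congr_fun fun n => ?_
    rw [pow_succ, ← mul_assoc, mul_div_cancel_right₀ _ hu0.ne']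
  intro s hs t ht hst
  refine hasSum_lt (i := 1) (fun n => ?_) ?_ (hasSum_div s hs) (hasSum_div t ht)
  · have := pow_le_pow_left₀ hs.1.le hst.le (2 * n)
    gcongr
  · have := pow_lt_pow_left₀ hst hs.1.le two_ne_zero
    norm_num
    linarith

lemma strictAntiOn_mul_log_add_one_sub_log_sub_one :
    StrictAntiOn (fun x : ℝ => x * (log (x + 1) - log (x - 1))) (Ioi 1) := by
  have eq_inv : ∀ x ∈ Ioi (1 : ℝ),
      x * (log (x + 1) - log (x - 1)) = (log (1 + x⁻¹) - log (1 - x⁻¹)) / x⁻¹ := by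
    intro x (hx : 1 < x)
    have hx0 : x ≠ 0 := by positivity
    rw [div_inv_eq_mul, mul_comm, ← log_div (by positivity) (by linarith),
      ← log_div (by positivity) (sub_ne_zero.2 (inv_lt_one_of_one_lt₀ hx).ne')]
    congr 2
    field_simp
  intro x hx y hy hxy
  have mem : ∀ z ∈ Ioi (1 : ℝ), z⁻¹ ∈ Ioo (0 : ℝ) 1 := fun z (hz : 1 < z) =>
    ⟨by positivity, inv_lt_one_of_one_lt₀ hz⟩
  simp only [eq_inv x hx, eq_inv y hy]
  exact strictMonoOn_log_one_add_sub_log_one_sub_div (mem y hy) (mem x hx)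
    (inv_strictAntiOn (mem_Ioi.2 (zero_lt_one.trans hx)) (mem_Ioi.2 (zero_lt_one.trans hy)) hxy)

lemma hasDerivAt_rpow_add_one_mul_rpow_neg {k lam c x : ℝ} (hk : 0 ≤ k)
    (hlam : (k - 1) * lam = k + 1) (hxc : 0 ≤ x + c) (hlxc : 0 < lam * x + c) :
    HasDerivAt (fun y => (y + c) ^ (k + 1) * (lam * y + c) ^ (-k))
      (lam * (x - c) * (x + c) ^ k * (lam * x + c) ^ (-k - 1)) x := by
  have hpow := ((hasDerivAt_id x).add_const c).rpow_const (p := k + 1) (Or.inr (by linarith))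
  have hneg := (((hasDerivAt_id x).const_mul lam).add_const c).rpow_const (p := -k)
    (Or.inl hlxc.ne')
  refine (hpow.mul hneg).congr_deriv ?_
  have hsucc : (x + c) ^ (k + 1) = (x + c) ^ k * (x + c) :=
    rpow_add_one' hxc (by linarith)
  have hpred : (lam * x + c) ^ (-k) = (lam * x + c) ^ (-k - 1) * (lam * x + c) := by
    simpa using rpow_add_one hlxc.ne' (-k - 1)
  simp only [id, add_sub_cancel_right, hsucc, hpred]
  linear_combination -(x + c) ^ k * (lam * x + c) ^ (-k - 1) * c * hlam

lemma hasDerivAt_rpow_add_one_mul_rpow_neg_sub {k lam x : ℝ} (hk : 1 < k)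
    (hlam : (k - 1) * lam = k + 1) (hx : 1 ≤ x) :
    HasDerivAt (fun y => (y + 1) ^ (k + 1) * (lam * y + 1) ^ (-k)
        - (y - 1) ^ (k + 1) * (lam * y - 1) ^ (-k))
      (lam * (x ^ 2 - 1) * ((x + 1) ^ (k - 1) * (lam * x + 1) ^ (-k - 1)
        - (x - 1) ^ (k - 1) * (lam * x - 1) ^ (-k - 1))) x := by
  have hlam1 : 1 < lam := by nlinarith
  have hplus := hasDerivAt_rpow_add_one_mul_rpow_neg (c := 1) (x := x) (by linarith) hlam
    (by linarith) (by nlinarith)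
  have hminus := hasDerivAt_rpow_add_one_mul_rpow_neg (c := -1) (x := x) (by linarith) hlam
    (by linarith) (by nlinarith)
  simp only [← sub_eq_add_neg, sub_neg_eq_add] at hminus
  refine (hplus.sub hminus).congr_deriv ?_
  have hpred : ∀ z : ℝ, 0 ≤ z → z ^ k = z ^ (k - 1) * z := fun z hz => by
    simpa using rpow_add_one' hz (y := k - 1) (by linarith)
  rw [hpred (x + 1) (by linarith), hpred (x - 1) (by linarith)]
  ring

lemma rpow_mul_rpow_neg_lt {k lam x : ℝ} (hk : 1 < k)
    (hlam : (k - 1) * lam = k + 1) (hx : 1 < x) :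
    (x - 1) ^ (k - 1) * (lam * x - 1) ^ (-k - 1)
      < (x + 1) ^ (k - 1) * (lam * x + 1) ^ (-k - 1) := by
  have hlam1 : 1 < lam := by nlinarith
  have hlx : 1 < lam * x := by nlinarith
  have hanti := strictAntiOn_mul_log_add_one_sub_log_sub_one (mem_Ioi.2 hx) (mem_Ioi.2 hlx)
    (by nlinarith)
  simp only at hanti
  have hlog : (k + 1) * (log (lam * x + 1) - log (lam * x - 1))
      < (k - 1) * (log (x + 1) - log (x - 1)) := by
    rw [← hlam]
    nlinarith
  rw [rpow_def_of_pos (by linarith), rpow_def_of_pos (by linarith),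
    rpow_def_of_pos (by linarith), rpow_def_of_pos (by linarith), ← exp_add, ← exp_add,
    exp_lt_exp]
  linarith

lemma two_rpow_add_one_mul_rpow_neg {k : ℝ} (hk : 1 < k) :
    (2 : ℝ) ^ (k + 1) * ((k + 1) / (k - 1) + 1) ^ (-k) = 2 * ((k - 1) / k) ^ k := by
  have hbase : (k + 1) / (k - 1) + 1 = 2 * k / (k - 1) := by
    field_simp [show k - 1 ≠ 0 by linarith]
    ring
  rw [hbase, rpow_neg (by positivity), ← inv_rpow (by positivity), inv_div,
    rpow_add_one two_ne_zero, mul_comm _ (2 : ℝ), mul_assoc,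
    ← mul_rpow zero_le_two (by positivity)]
  congr 2
  field_simp

/-- The function `f_k(ν) = (ν+1)^{k+1}(λν+1)^{−k} − (ν−1)^{k+1}(λν−1)^{−k}`, with
`λ = (k+1)/(k−1)` and real powers, is strictly increasing on `[1,∞)`; its minimum on
`[1,∞)` is attained at `ν = 1` with value `2((k−1)/k)^k`. -/
theorem f_k_strictMono (k : ℝ) (hk : 1 < k) (f : ℝ → ℝ)
    (hf : ∀ ν : ℝ, f ν =
      (ν + 1) ^ (k + 1) * (((k+1)/(k-1)) * ν + 1) ^ (-k)
        - (ν - 1) ^ (k + 1) * (((k+1)/(k-1)) * ν - 1) ^ (-k)) :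
    StrictMonoOn f (Set.Ici 1) ∧
    (∀ ν ∈ Set.Ici (1:ℝ), f 1 ≤ f ν) ∧
    f 1 = 2 * ((k - 1) / k) ^ k := by
  have hlam : (k - 1) * ((k + 1) / (k - 1)) = k + 1 := mul_div_cancel₀ _ (by linarith)
  have hderiv (ν : ℝ) (hν : 1 ≤ ν) :=
    funext hf ▸ hasDerivAt_rpow_add_one_mul_rpow_neg_sub hk hlam hν
  have mono : StrictMonoOn f (Ici 1) := by
    refine strictMonoOn_of_deriv_pos (convex_Ici 1)
      (fun ν hν => (hderiv ν hν).continuousAt.continuousWithinAt) fun ν hν => ?_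
    rw [interior_Ici, mem_Ioi] at hν
    rw [(hderiv ν hν.le).deriv]
    exact mul_pos (mul_pos (div_pos (by linarith) (by linarith)) (by nlinarith))
      (sub_pos.2 (rpow_mul_rpow_neg_lt hk hlam hν))
  refine ⟨mono, fun ν hν => mono.monotoneOn self_mem_Ici hν hν, ?_⟩
  rw [hf, sub_self, zero_rpow (by linarith), zero_mul, sub_zero, mul_one, one_add_one_eq_two]
  exact two_rpow_add_one_mul_rpow_neg hk
end

section
/- For real numbers λ > 1 and ν > 1, define g(λ, ν) = ln((ν+1)/(ν−1)) − λ·ln((λν+1)/(λν−1)). Then g(λ, ν) > 0. -/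
/-!
Writing `L u = log ((u + 1) / (u - 1))`, one has `ν · g(λ, ν) = ψ ν - ψ (λν)` for
`ψ u = u · L u`, so it suffices that `ψ` is strictly decreasing on `(1, ∞)`.
Its derivative is `L u - 2u / (u² - 1)`, which is negative: with `x = L u > 0`,
the bound `L u < 2u / (u² - 1)` is exactly `x < sinh x`.
-/

open Real Set

theorem Real.log_div_lt_of_one_lt {u : ℝ} (hu : 1 < u) :
    log ((u + 1) / (u - 1)) < 2 * u / (u ^ 2 - 1) := by
  have hsub : 0 < u - 1 := by linarith
  have hq : 1 < (u + 1) / (u - 1) := by rw [lt_div_iff₀ hsub]; linarith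
  have hsinh := self_lt_sinh_iff.mpr (log_pos hq)
  have hsinh_eq : sinh (log ((u + 1) / (u - 1))) = 2 * u / (u ^ 2 - 1) := by
    have hsq : u ^ 2 - 1 ≠ 0 := by nlinarith
    rw [sinh_eq, exp_neg, exp_log (by positivity)]
    field_simp
    ring
  exact hsinh_eq ▸ hsinh

theorem Real.hasDerivAt_mul_log_div {u : ℝ} (hu : 1 < u) :
    HasDerivAt (fun t => t * log ((t + 1) / (t - 1)))
      (log ((u + 1) / (u - 1)) - 2 * u / (u ^ 2 - 1)) u := by
  have hsub : u - 1 ≠ 0 := by linarith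
  have hquot : HasDerivAt (fun t => (t + 1) / (t - 1)) (-2 / (u - 1) ^ 2) u := by
    refine (((hasDerivAt_id' u).add_const 1).div
      ((hasDerivAt_id' u).sub_const 1) hsub).congr_deriv ?_
    ring
  have hlog := hquot.log (div_ne_zero (by linarith) hsub)
  refine ((hasDerivAt_id' u).mul hlog).congr_deriv ?_
  have hsq : u ^ 2 - 1 ≠ 0 := by nlinarith
  have hadd : u + 1 ≠ 0 := by linarith
  field_simp
  ring

theorem Real.strictAntiOn_mul_log_div :
    StrictAntiOn (fun u => u * log ((u + 1) / (u - 1))) (Ioi 1) := by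
  refine strictAntiOn_of_deriv_neg (convex_Ioi 1)
    (fun u hu => (hasDerivAt_mul_log_div hu).continuousAt.continuousWithinAt) ?_
  intro u hu
  rw [interior_Ioi] at hu
  rw [(hasDerivAt_mul_log_div hu).deriv]
  exact sub_neg.mpr (log_div_lt_of_one_lt hu)

/-- For `λ > 1` and `ν > 1`,
`g(λ,ν) = ln((ν+1)/(ν−1)) − λ·ln((λν+1)/(λν−1)) > 0`. -/
theorem g_pos (l ν : ℝ) (hl : 1 < l) (hν : 1 < ν) :
    0 < Real.log ((ν + 1) / (ν - 1)) - l * Real.log ((l*ν + 1) / (l*ν - 1)) := by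
  have hν_pos : 0 < ν := by linarith
  have hlν : ν < l * ν := by nlinarith
  have hψ := strictAntiOn_mul_log_div (mem_Ioi.mpr hν) (mem_Ioi.mpr (hν.trans hlν)) hlν
  refine pos_of_mul_pos_right (a := ν) ?_ hν_pos.le
  simp only at hψ
  linarith
end

section
/- Define φ : (0,∞) → ℝ by φ(x) = ((e^x+1)/2)·ln((e^x+1)/2) − ((e^x−1)/2)·ln((e^x−1)/2). Then φ is concave on (0,∞) and strictly monotonically increasing on (0,∞). Consequently, for any positive integer n and any real numbers ν₁, …, ν_n > 1, one has ∑_{j=1}^n φ(ln ν_j) ≤ n·φ((1/n)·∑_{j=1}^n ln ν_j). -/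
open Real Finset

/-! Writing `t = eˣ`, one has `φ x = negMulLog ((t - 1) / 2) - negMulLog ((t + 1) / 2)` and
`φ' x = (t / 2) · log ((t + 1) / (t - 1)) > 0`. The sign of `φ''` is that of
`log s - (s - s⁻¹) / 2 = log s - sinh (log s)` for `s = (t + 1) / (t - 1) > 1`, which is `≤ 0`.
The sum bound is Jensen's inequality for the concave `φ` with uniform weights. -/

theorem ConcaveOn.sum_le_card_mul_map_average {E ι : Type*} [AddCommGroup E] [Module ℝ E]
    {s : Set E} {f : E → ℝ} (hf : ConcaveOn ℝ s f) {t : Finset ι} (ht : t.Nonempty)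
    {p : ι → E} (hp : ∀ i ∈ t, p i ∈ s) :
    ∑ i ∈ t, f (p i) ≤ #t * f ((#t : ℝ)⁻¹ • ∑ i ∈ t, p i) := by
  have hcard : (0 : ℝ) < #t := by exact_mod_cast ht.card_pos
  have hjensen := hf.le_map_sum (w := fun _ ↦ (#t : ℝ)⁻¹) (fun _ _ ↦ by positivity)
    (by simp [hcard.ne']) hp
  rw [← smul_sum, ← smul_sum, smul_eq_mul] at hjensen
  rwa [← inv_mul_le_iff₀ hcard]

theorem log_le_half_sub_inv {s : ℝ} (hs : 1 ≤ s) : log s ≤ (s - s⁻¹) / 2 := by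
  simpa [sinh_log (by linarith)] using self_le_sinh_iff.2 (log_nonneg hs)

theorem log_add_one_sub_log_sub_one_le {t : ℝ} (ht : 1 < t) :
    log (t + 1) - log (t - 1) ≤ t / (t - 1) - t / (t + 1) := by
  have hpos : 0 < t - 1 := by linarith
  have hs : 1 ≤ (t + 1) / (t - 1) := (one_le_div hpos).2 (by linarith)
  rw [← log_div (by linarith) hpos.ne']
  convert log_le_half_sub_inv hs using 1
  field_simp
  ring

noncomputable def thermalEntropy (x : ℝ) : ℝ :=
  negMulLog ((exp x - 1) / 2) - negMulLog ((exp x + 1) / 2)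

noncomputable def thermalEntropyDeriv (x : ℝ) : ℝ :=
  exp x / 2 * (log (exp x + 1) - log (exp x - 1))

noncomputable def thermalEntropyDeriv2 (x : ℝ) : ℝ :=
  exp x / 2 * (log (exp x + 1) - log (exp x - 1) + exp x / (exp x + 1) - exp x / (exp x - 1))


theorem hasDerivAt_thermalEntropy {x : ℝ} (hx : 0 < x) :
    HasDerivAt thermalEntropy (thermalEntropyDeriv x) x := by
  have he : 1 < exp x := Real.one_lt_exp_iff.2 hx
  have hminus := (hasDerivAt_negMulLog (by linarith : (exp x - 1) / 2 ≠ 0)).comp x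
    (((hasDerivAt_exp x).sub_const 1).div_const 2)
  have hplus := (hasDerivAt_negMulLog (by positivity : (exp x + 1) / 2 ≠ 0)).comp x
    (((hasDerivAt_exp x).add_const 1).div_const 2)
  refine (hminus.sub hplus).congr_deriv ?_
  rw [thermalEntropyDeriv, log_div (by linarith) two_ne_zero, log_div (by positivity) two_ne_zero]
  ring

theorem hasDerivAt_thermalEntropyDeriv {x : ℝ} (hx : 0 < x) :
    HasDerivAt thermalEntropyDeriv (thermalEntropyDeriv2 x) x := by
  have he : 1 < exp x := Real.one_lt_exp_iff.2 hx
  have hplus := ((hasDerivAt_exp x).add_const 1).log (by positivity)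
  have hminus := ((hasDerivAt_exp x).sub_const 1).log (by linarith)
  refine (((hasDerivAt_exp x).div_const 2).mul (hplus.sub hminus)).congr_deriv ?_
  rw [Pi.sub_apply, thermalEntropyDeriv2]
  ring

theorem thermalEntropyDeriv_pos {x : ℝ} (hx : 0 < x) : 0 < thermalEntropyDeriv x := by
  have he : 1 < exp x := Real.one_lt_exp_iff.2 hx
  have hlog : log (exp x - 1) < log (exp x + 1) := log_lt_log (by linarith) (by linarith)
  unfold thermalEntropyDeriv
  exact mul_pos (by positivity) (by linarith)

theorem thermalEntropyDeriv2_nonpos {x : ℝ} (hx : 0 < x) : thermalEntropyDeriv2 x ≤ 0 := by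
  have he : 1 < exp x := Real.one_lt_exp_iff.2 hx
  have := log_add_one_sub_log_sub_one_le he
  exact mul_nonpos_of_nonneg_of_nonpos (by positivity) (by linarith)

theorem concaveOn_thermalEntropy : ConcaveOn ℝ (Set.Ioi 0) thermalEntropy := by
  refine concaveOn_of_hasDerivWithinAt2_nonpos (f' := thermalEntropyDeriv)
    (f'' := thermalEntropyDeriv2) (convex_Ioi 0)
    (HasDerivAt.continuousOn fun _ ↦ hasDerivAt_thermalEntropy) ?_ ?_ ?_ <;>
  rw [interior_Ioi]
  · exact fun _ hx ↦ (hasDerivAt_thermalEntropy hx).hasDerivWithinAt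
  · exact fun _ hx ↦ (hasDerivAt_thermalEntropyDeriv hx).hasDerivWithinAt
  · exact fun _ ↦ thermalEntropyDeriv2_nonpos

theorem strictMonoOn_thermalEntropy : StrictMonoOn thermalEntropy (Set.Ioi 0) := by
  refine strictMonoOn_of_hasDerivWithinAt_pos (f' := thermalEntropyDeriv) (convex_Ioi 0)
    (HasDerivAt.continuousOn fun _ ↦ hasDerivAt_thermalEntropy) ?_ ?_ <;>
  rw [interior_Ioi]
  · exact fun _ hx ↦ (hasDerivAt_thermalEntropy hx).hasDerivWithinAt
  · exact fun _ ↦ thermalEntropyDeriv_pos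

/-- The function `φ(x) = ((eˣ+1)/2)·ln((eˣ+1)/2) − ((eˣ−1)/2)·ln((eˣ−1)/2)` is concave
and strictly increasing on `(0,∞)`; by Jensen's inequality, for `ν₁, …, ν_n > 1` one
has `∑_j φ(ln ν_j) ≤ n·φ((1/n)∑_j ln ν_j)`. -/
theorem phi_concave_mono_jensen (φ : ℝ → ℝ)
    (hφ : ∀ x : ℝ, φ x =
      ((Real.exp x + 1) / 2) * Real.log ((Real.exp x + 1) / 2)
        - ((Real.exp x - 1) / 2) * Real.log ((Real.exp x - 1) / 2)) :
    ConcaveOn ℝ (Set.Ioi 0) φ ∧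
    StrictMonoOn φ (Set.Ioi 0) ∧
    ∀ (n : ℕ), 0 < n → ∀ ν : Fin n → ℝ, (∀ j, 1 < ν j) →
      ∑ j, φ (Real.log (ν j)) ≤ (n : ℝ) * φ ((1 / (n : ℝ)) * ∑ j, Real.log (ν j)) := by
  obtain rfl : φ = thermalEntropy := funext fun x ↦ by
    rw [hφ, thermalEntropy, negMulLog, negMulLog]
    ring
  refine ⟨concaveOn_thermalEntropy, strictMonoOn_thermalEntropy, fun n hn ν hν ↦ ?_⟩
  have hjensen := concaveOn_thermalEntropy.sum_le_card_mul_map_average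
    (univ_nonempty_iff.2 ⟨⟨0, hn⟩⟩) (p := fun j ↦ log (ν j)) fun j _ ↦ log_pos (hν j)
  simpa only [card_univ, Fintype.card_fin, smul_eq_mul, one_div] using hjensen
end
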